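/- arXiv:2205.11006 — 5 statements merged into one kernel-verified Lean document; each statement's English description precedes it below -/
import Mathlib

section
/- For every m ∈ ℕ, every c₁,…,c_m ∈ ℝ and every r₁,…,r_m ≥ 0, one has Σ_{k=1}^m Σ_{j=1}^m c_k c_j G_d(r_k, r_j) = (1/N) Σ_{i=1}^N ∫_{ℝ^d} ( ∫_{S^{d−1}} Σ_{k=1}^m c_k [u_i(x + r_k ξ) − u_i(x)] dσ(ξ) )² dx; in particular Σ_{k,j} c_k c_j G_d(r_k, r_j) ≥ 0, i.e. G_d is a positive semi-definite kernel on [0,∞). -/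
open MeasureTheory Set
open scoped BigOperators Pointwise

noncomputable section

/-- The surface measure on the unit sphere `S^{d-1} ⊂ ℝ^d` (polar decomposition measure). -/
def sphMeasure (d : ℕ) : Measure (Metric.sphere (0 : EuclideanSpace ℝ (Fin d)) 1) :=
  (volume : Measure (EuclideanSpace ℝ (Fin d))).toSphere

/-- The data-based integral kernel `G_d`. -/
def Gd (d N : ℕ) (u : Fin N → EuclideanSpace ℝ (Fin d) → ℝ) (r s : ℝ) : ℝ :=
  (N : ℝ)⁻¹ * ∑ i, ∫ η : Metric.sphere (0 : EuclideanSpace ℝ (Fin d)) 1,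
    (∫ ξ : Metric.sphere (0 : EuclideanSpace ℝ (Fin d)) 1,
      (∫ x, (u i (x + r • (ξ : EuclideanSpace ℝ (Fin d))) - u i x) *
        (u i (x + s • (η : EuclideanSpace ℝ (Fin d))) - u i x) ∂volume)
      ∂(sphMeasure d)) ∂(sphMeasure d)

namespace GdAux

variable {d : ℕ} {u : EuclideanSpace ℝ (Fin d) → ℝ}

local notation "E'" => EuclideanSpace ℝ (Fin d)
local notation "S'" => Metric.sphere (0 : EuclideanSpace ℝ (Fin d)) 1

instance : IsFiniteMeasure (sphMeasure d) := by unfold sphMeasure; infer_instance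

lemma vanish (u : E' → ℝ) (a : ℝ) {x : E'}
    (hx : x ∉ tsupport u + Metric.closedBall (0 : E') |a|) (ξ : S') :
    u (x + a • (ξ : E')) - u x = 0 := by
  have h1 : u x = 0 := by
    by_contra h
    refine hx ?_
    have := Set.add_mem_add (subset_tsupport u h)
      (Metric.mem_closedBall_self (abs_nonneg a) : (0 : E') ∈ Metric.closedBall 0 |a|)
    simpa using this
  have h2 : u (x + a • (ξ : E')) = 0 := by
    by_contra h
    refine hx ?_
    have hball : -(a • (ξ : E')) ∈ Metric.closedBall (0 : E') |a| := by
      rw [mem_closedBall_zero_iff, norm_neg, norm_smul, norm_eq_of_mem_sphere, mul_one,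
        Real.norm_eq_abs]
    have := Set.add_mem_add (subset_tsupport u h) hball
    simpa using this
  rw [h1, h2, sub_zero]

lemma compactK (hcs : HasCompactSupport u) (a : ℝ) :
    IsCompact (tsupport u + Metric.closedBall (0 : E') |a|) :=
  IsCompact.add hcs (isCompact_closedBall _ _)

lemma contF (hu : Continuous u) (a : ℝ) :
    Continuous fun p : S' × E' => u (p.2 + a • (p.1 : E')) - u p.2 :=
  (hu.comp (continuous_snd.add ((continuous_subtype_val.comp continuous_fst).const_smul a))).sub
    (hu.comp continuous_snd)

lemma hcsF (hcs : HasCompactSupport u) (a : ℝ) :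
    HasCompactSupport fun p : S' × E' => u (p.2 + a • (p.1 : E')) - u p.2 := by
  refine HasCompactSupport.intro (isCompact_univ.prod (compactK hcs a)) fun p hp => ?_
  simp only [Set.mem_prod, Set.mem_univ, true_and] at hp
  exact vanish u a hp p.1

lemma contH (hu : Continuous u) (hcs : HasCompactSupport u) (a : ℝ) :
    Continuous fun x : E' => ∫ ξ : S', (u (x + a • (ξ : E')) - u x) ∂(sphMeasure d) := by
  obtain ⟨C, hC⟩ := (hcsF hcs a).exists_bound_of_continuous (contF hu a)
  refine continuous_of_dominated (fun x => ?_) (fun x => ae_of_all _ fun ξ => ?_)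
    (integrable_const C) (ae_of_all _ fun ξ => ?_)
  · exact ((hu.comp (continuous_const.add (continuous_subtype_val.const_smul a))).sub
      continuous_const).aestronglyMeasurable
  · exact hC (ξ, x)
  · exact (hu.comp (continuous_id.add continuous_const)).sub hu

lemma hcsH (hcs : HasCompactSupport u) (a : ℝ) :
    HasCompactSupport fun x : E' => ∫ ξ : S', (u (x + a • (ξ : E')) - u x) ∂(sphMeasure d) := by
  refine HasCompactSupport.intro (compactK hcs a) fun x hx => ?_
  rw [show (fun ξ : S' => u (x + a • (ξ : E')) - u x) = fun _ => (0 : ℝ) from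
    funext fun ξ => vanish u a hx ξ, integral_zero]

lemma key (hu : Continuous u) (hcs : HasCompactSupport u) (a b : ℝ) :
    (∫ η : S', ∫ ξ : S', ∫ x, (u (x + a • (ξ : E')) - u x) * (u (x + b • (η : E')) - u x)
      ∂volume ∂(sphMeasure d) ∂(sphMeasure d))
    = ∫ x, (∫ ξ : S', (u (x + a • (ξ : E')) - u x) ∂(sphMeasure d)) *
        (∫ η : S', (u (x + b • (η : E')) - u x) ∂(sphMeasure d)) ∂volume := by
  have step1 : ∀ η : S',
      (∫ ξ : S', ∫ x, (u (x + a • (ξ : E')) - u x) * (u (x + b • (η : E')) - u x)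
        ∂volume ∂(sphMeasure d))
      = ∫ x, (∫ ξ : S', (u (x + a • (ξ : E')) - u x) ∂(sphMeasure d)) *
          (u (x + b • (η : E')) - u x) ∂volume := by
    intro η
    have hint : Integrable (Function.uncurry fun (ξ : S') (x : E') =>
        (u (x + a • (ξ : E')) - u x) * (u (x + b • (η : E')) - u x))
        ((sphMeasure d).prod volume) := by
      apply Continuous.integrable_of_hasCompactSupport
      · exact (contF hu a).mul
          ((hu.comp (continuous_snd.add continuous_const)).sub (hu.comp continuous_snd))
      · exact (hcsF hcs a).mul_right
    rw [integral_integral_swap hint]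
    exact integral_congr_ae (ae_of_all _ fun x => integral_mul_const _ _)
  simp_rw [step1]
  have hint2 : Integrable (Function.uncurry fun (η : S') (x : E') =>
      (∫ ξ : S', (u (x + a • (ξ : E')) - u x) ∂(sphMeasure d)) * (u (x + b • (η : E')) - u x))
      ((sphMeasure d).prod volume) := by
    apply Continuous.integrable_of_hasCompactSupport
    · exact ((contH hu hcs a).comp continuous_snd).mul (contF hu b)
    · exact (hcsF hcs b).mul_left
  rw [integral_integral_swap hint2]
  exact integral_congr_ae (ae_of_all _ fun x => integral_const_mul _ _)

lemma per_i (hu : Continuous u) (hcs : HasCompactSupport u) {m : ℕ} (c r : Fin m → ℝ) :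
    (∑ k, ∑ j, c k * c j *
      ∫ η : S', ∫ ξ : S', ∫ x, (u (x + r k • (ξ : E')) - u x) * (u (x + r j • (η : E')) - u x)
        ∂volume ∂(sphMeasure d) ∂(sphMeasure d))
    = ∫ x, (∫ ξ : S', (∑ k, c k * (u (x + r k • (ξ : E')) - u x)) ∂(sphMeasure d)) ^ 2
        ∂volume := by
  set h : Fin m → E' → ℝ :=
    fun k x => ∫ ξ : S', (u (x + r k • (ξ : E')) - u x) ∂(sphMeasure d) with hh
  have hHc : ∀ k, Continuous (h k) := fun k => contH hu hcs (r k)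
  have hHcs : ∀ k, HasCompactSupport (h k) := fun k => hcsH hcs (r k)
  have hint : ∀ k j : Fin m, Integrable (fun x => (c k * h k x) * (c j * h j x)) volume := by
    intro k j
    apply Continuous.integrable_of_hasCompactSupport
    · exact (continuous_const.mul (hHc k)).mul (continuous_const.mul (hHc j))
    · exact ((hHcs k).mul_left).mul_right
  have hinner : ∀ x : E',
      (∫ ξ : S', (∑ k, c k * (u (x + r k • (ξ : E')) - u x)) ∂(sphMeasure d))
      = ∑ k, c k * h k x := by
    intro x
    rw [integral_finset_sum]
    · exact Finset.sum_congr rfl fun k _ => integral_const_mul _ _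
    · intro k _
      apply Continuous.integrable_of_hasCompactSupport
      · exact continuous_const.mul ((hu.comp (continuous_const.add
          (continuous_subtype_val.const_smul (r k)))).sub continuous_const)
      · exact HasCompactSupport.of_compactSpace _
  calc _ = ∑ k, ∑ j, ∫ x, (c k * h k x) * (c j * h j x) ∂volume := by
        refine Finset.sum_congr rfl fun k _ => Finset.sum_congr rfl fun j _ => ?_
        rw [key hu hcs (r k) (r j), ← integral_const_mul]
        exact integral_congr_ae (ae_of_all _ fun x => by ring)
    _ = ∫ x, ∑ k, ∑ j, (c k * h k x) * (c j * h j x) ∂volume := by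
        rw [integral_finset_sum _ (fun k _ => integrable_finset_sum _ (fun j _ => hint k j))]
        exact Finset.sum_congr rfl fun k _ => (integral_finset_sum _ (fun j _ => hint k j)).symm
    _ = ∫ x, (∑ k, c k * h k x) ^ 2 ∂volume := by
        refine integral_congr_ae (ae_of_all _ fun x => ?_)
        show ∑ k, ∑ j, (c k * h k x) * (c j * h j x) = (∑ k, c k * h k x) ^ 2
        rw [sq, Finset.sum_mul_sum]
    _ = ∫ x, (∫ ξ : S', (∑ k, c k * (u (x + r k • (ξ : E')) - u x)) ∂(sphMeasure d)) ^ 2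
        ∂volume := by
        refine integral_congr_ae (ae_of_all _ fun x => ?_)
        show (∑ k, c k * h k x) ^ 2 = _ ^ 2
        rw [hinner x]

end GdAux

/-- `G_d` is a positive semi-definite kernel on `[0,∞)`: the quadratic form equals a sum of
squares, hence is nonnegative. -/

theorem Gd_posSemidef (d : ℕ) (hd : 1 ≤ d) (N : ℕ) (hN : 0 < N)
    (u : Fin N → EuclideanSpace ℝ (Fin d) → ℝ)
    (hu : ∀ i, Continuous (u i)) (hcs : ∀ i, HasCompactSupport (u i))
    (m : ℕ) (c : Fin m → ℝ) (r : Fin m → ℝ) (hr : ∀ k, 0 ≤ r k) :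
    (∑ k, ∑ j, c k * c j * Gd d N u (r k) (r j)
      = (N : ℝ)⁻¹ * ∑ i, ∫ x, (∫ ξ : Metric.sphere (0 : EuclideanSpace ℝ (Fin d)) 1,
          (∑ k, c k * (u i (x + r k • (ξ : EuclideanSpace ℝ (Fin d))) - u i x))
          ∂(sphMeasure d)) ^ 2 ∂volume)
    ∧ 0 ≤ ∑ k, ∑ j, c k * c j * Gd d N u (r k) (r j) := by
  have rearrange : ∀ (a : ℝ) (f : Fin N → Fin m → Fin m → ℝ),
      ∑ k, ∑ j, c k * c j * (a * ∑ i, f i k j)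
        = a * ∑ i, ∑ k, ∑ j, c k * c j * f i k j := by
    intro a f
    calc ∑ k, ∑ j, c k * c j * (a * ∑ i, f i k j)
        = ∑ k, ∑ j, ∑ i, c k * c j * (a * f i k j) := by
          simp only [Finset.mul_sum]
      _ = ∑ k, ∑ i, ∑ j, c k * c j * (a * f i k j) :=
          Finset.sum_congr rfl fun k _ => Finset.sum_comm
      _ = ∑ i, ∑ k, ∑ j, c k * c j * (a * f i k j) := Finset.sum_comm
      _ = a * ∑ i, ∑ k, ∑ j, c k * c j * f i k j := by
          rw [Finset.mul_sum]
          refine Finset.sum_congr rfl fun i _ => ?_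
          rw [Finset.mul_sum]
          refine Finset.sum_congr rfl fun k _ => ?_
          rw [Finset.mul_sum]
          exact Finset.sum_congr rfl fun j _ => by ring
  have main : ∑ k, ∑ j, c k * c j * Gd d N u (r k) (r j)
      = (N : ℝ)⁻¹ * ∑ i, ∫ x, (∫ ξ : Metric.sphere (0 : EuclideanSpace ℝ (Fin d)) 1,
          (∑ k, c k * (u i (x + r k • (ξ : EuclideanSpace ℝ (Fin d))) - u i x))
          ∂(sphMeasure d)) ^ 2 ∂volume := by
    simp only [Gd]
    rw [rearrange]
    congr 1
    exact Finset.sum_congr rfl fun i _ => GdAux.per_i (hu i) (hcs i) c r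
  refine ⟨main, ?_⟩
  rw [main]
  exact mul_nonneg (inv_nonneg.2 (Nat.cast_nonneg N))
    (Finset.sum_nonneg fun i _ => integral_nonneg fun x => sq_nonneg _)
end
end

section
/- For all bounded measurable functions φ₁, φ₂ : [0,∞) → ℝ supported in [0,R₀], (1/N) Σ_{k=1}^N ∫_ℝ L_{φ₁}[u_k](x) · L_{φ₂}[u_k](x) dx = ∫₀^∞ ∫₀^∞ φ₁(r) φ₂(s) G(r,s) dr ds. -/
open MeasureTheory Set
open scoped BigOperators

noncomputable section

/-- The nonlocal operator `L_φ[u](x) = ∫_ℝ φ(|y-x|)(u(y)-u(x)) dy`. -/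
def Lop (φ : ℝ → ℝ) (u : ℝ → ℝ) (x : ℝ) : ℝ :=
  ∫ y, φ |y - x| * (u y - u x)

/-- The 1D data-based integral kernel `G`. -/
def Gker (N : ℕ) (u : Fin N → ℝ → ℝ) (r s : ℝ) : ℝ :=
  (N : ℝ)⁻¹ * ∑ i, ∫ x, (u i (x + r) + u i (x - r) - 2 * u i x) *
    (u i (x + s) + u i (x - s) - 2 * u i x)

/-- Second difference. -/
def Dop (u : ℝ → ℝ) (r x : ℝ) : ℝ := u (x + r) + u (x - r) - 2 * u x

lemma integrable_of_bound {α : Type*} [MeasurableSpace α] {μ : Measure α}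
    {f : α → ℝ} {s : Set α} (hs : MeasurableSet s) (hμ : μ s ≠ ⊤) (C : ℝ)
    (hf : AEStronglyMeasurable f μ) (h1 : ∀ x ∈ s, ‖f x‖ ≤ C) (h2 : ∀ x ∉ s, f x = 0) :
    Integrable f μ := by
  have hbd : ∀ x, ‖f x‖ ≤ s.indicator (fun _ => C) x := by
    intro x
    by_cases hx : x ∈ s
    · rw [Set.indicator_of_mem hx]; exact h1 x hx
    · rw [Set.indicator_of_notMem hx, h2 x hx, norm_zero]
  exact Integrable.mono'
    ((integrable_indicator_iff hs).2 (integrableOn_const hμ enorm_ne_top))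
    hf (Filter.Eventually.of_forall hbd)

lemma prod_box_ne_top {μ ν : Measure ℝ} {S T : Set ℝ}
    (h1 : μ S ≠ ⊤) (h2 : ν T ≠ ⊤) [SFinite ν] : (μ.prod ν) (S ×ˢ T) ≠ ⊤ := by
  rw [Measure.prod_prod]
  exact ENNReal.mul_ne_top h1 h2

lemma restrict_set_ne_top (S : Set ℝ) (a b : ℝ) :
    (volume.restrict S) (Icc a b) ≠ ⊤ := by
  have h : (volume.restrict S) (Icc a b) ≤ volume (Icc a b) :=
    Measure.le_iff'.1 Measure.restrict_le_self _
  exact (h.trans_lt measure_Icc_lt_top).ne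

/-- The main per-function lemma: integrability of the kernel integrand on the product
and the Fubini-type identity. -/
lemma perk (R₀ : ℝ) (hR₀ : 0 < R₀) (u : ℝ → ℝ) (hu : Continuous u)
    (hcs : HasCompactSupport u) (φ₁ φ₂ : ℝ → ℝ)
    (hm₁ : Measurable φ₁) (hm₂ : Measurable φ₂)
    (hb₁ : ∃ M, ∀ r, |φ₁ r| ≤ M) (hb₂ : ∃ M, ∀ r, |φ₂ r| ≤ M)
    (hs₁ : ∀ r, r ∉ Set.Icc 0 R₀ → φ₁ r = 0) (hs₂ : ∀ r, r ∉ Set.Icc 0 R₀ → φ₂ r = 0) :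
    Integrable (fun p : ℝ × ℝ => φ₁ p.1 * φ₂ p.2 * ∫ x, Dop u p.1 x * Dop u p.2 x)
      ((volume.restrict (Ioi 0)).prod (volume.restrict (Ioi 0))) ∧
    (∫ x, Lop φ₁ u x * Lop φ₂ u x)
      = ∫ r in Ioi (0:ℝ), ∫ s in Ioi (0:ℝ), φ₁ r * φ₂ s * ∫ x, Dop u r x * Dop u s x := by
  obtain ⟨M₁, hM₁⟩ := hb₁
  obtain ⟨M₂, hM₂⟩ := hb₂
  have hM₁0 : 0 ≤ M₁ := (abs_nonneg _).trans (hM₁ 0)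
  have hM₂0 : 0 ≤ M₂ := (abs_nonneg _).trans (hM₂ 0)
  obtain ⟨B, hB⟩ : ∃ B, ∀ x, |u x| ≤ B := by
    obtain ⟨C, hC⟩ := hcs.exists_bound_of_continuous hu
    exact ⟨C, fun x => hC x⟩
  have hB0 : 0 ≤ B := (abs_nonneg _).trans (hB 0)
  obtain ⟨A, hA0, hA⟩ : ∃ A : ℝ, 0 ≤ A ∧ ∀ x, A < |x| → u x = 0 := by
    obtain ⟨r, hr⟩ := hcs.isBounded.subset_closedBall 0
    refine ⟨max r 0, le_max_right _ _, fun x hx => image_eq_zero_of_notMem_tsupport fun hxs => ?_⟩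
    have h2 := hr hxs
    rw [Metric.mem_closedBall, Real.dist_eq, sub_zero] at h2
    have := le_max_left r 0
    linarith
  -- basic facts about Dop
  have hDc : Continuous fun p : ℝ × ℝ => Dop u p.1 p.2 := by
    simp only [Dop]; fun_prop
  have hDb : ∀ r x, |Dop u r x| ≤ 4 * B := by
    intro r x
    have h1 := abs_le.mp (hB (x + r))
    have h2 := abs_le.mp (hB (x - r))
    have h3 := abs_le.mp (hB x)
    rw [Dop, abs_le]
    constructor <;> linarith [h1.1, h1.2, h2.1, h2.2, h3.1, h3.2]
  have habsx : ∀ a b : ℝ, |a| ≤ |a + b| + |b| := by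
    intro a b
    calc |a| = |(a + b) + (-b)| := by ring_nf
      _ ≤ |a + b| + |-b| := abs_add_le _ _
      _ = |a + b| + |b| := by rw [abs_neg]
  have hDz : ∀ r x, |r| ≤ R₀ → A + R₀ < |x| → Dop u r x = 0 := by
    intro r x hr hx
    have e1 : u (x + r) = 0 := by
      refine hA _ ?_
      have := habsx x r
      linarith
    have e2 : u (x - r) = 0 := by
      refine hA _ ?_
      have h := habsx x (-r)
      rw [abs_neg] at h
      have : x + -r = x - r := by ring
      rw [this] at h
      linarith
    have e3 : u x = 0 := hA _ (by linarith)
    rw [Dop, e1, e2, e3]; ring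
  -- the half-line representation of Lop
  have hrepr : ∀ (φ : ℝ → ℝ) (M : ℝ), Measurable φ → (∀ r, |φ r| ≤ M) →
      (∀ r, r ∉ Set.Icc 0 R₀ → φ r = 0) → ∀ x,
      Lop φ u x = ∫ r in Ioi (0:ℝ), φ r * Dop u r x := by
    intro φ M hm hMb hsφ x
    have hM0 : 0 ≤ M := (abs_nonneg _).trans (hMb 0)
    have habs0 : ∀ t : ℝ, R₀ < |t| → φ |t| = 0 := fun t ht =>
      hsφ _ (fun h => absurd h.2 (not_le.2 ht))
    have hIgen : ∀ v : ℝ → ℝ, Continuous v → (∀ t, |v t| ≤ 2 * B) →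
        Integrable (fun t => φ |t| * v t) := by
      intro v hv hvb
      refine integrable_of_bound (s := Icc (-R₀) R₀) measurableSet_Icc
        measure_Icc_lt_top.ne (M * (2 * B))
        ((hm.comp continuous_abs.measurable).mul hv.measurable).aestronglyMeasurable
        (fun t ht => ?_) (fun t ht => ?_)
      · rw [Real.norm_eq_abs, abs_mul]
        exact mul_le_mul (hMb _) (hvb t) (abs_nonneg _) hM0
      · have ht' : R₀ < |t| := by
          rw [Set.mem_Icc, not_and_or] at ht
          rcases ht with h | h
          · rcases abs_cases t with ⟨he, _⟩ | ⟨he, _⟩ <;> [linarith; linarith]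
          · rcases abs_cases t with ⟨he, _⟩ | ⟨he, _⟩ <;> [linarith; linarith]
        rw [habs0 t ht', zero_mul]
    have hsub : ∀ a b : ℝ, |u a - u b| ≤ 2 * B := by
      intro a b
      have h1 := abs_le.mp (hB a)
      have h2 := abs_le.mp (hB b)
      rw [abs_le]; constructor <;> linarith [h1.1, h1.2, h2.1, h2.2]
    have hInt : Integrable (fun t => φ |t| * (u (x + t) - u x)) :=
      hIgen _ (by fun_prop) (fun t => hsub _ _)
    have hIntneg : Integrable (fun t => φ |t| * (u (x - t) - u x)) :=
      hIgen _ (by fun_prop) (fun t => hsub _ _)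
    have step1 : Lop φ u x = ∫ t : ℝ, φ |t| * (u (x + t) - u x) := by
      rw [Lop, ← integral_add_left_eq_self x (f := fun y => φ |y - x| * (u y - u x))]
      congr 1; funext t; rw [add_sub_cancel_left]
    have e2 : (∫ t in Iic (0:ℝ), φ |t| * (u (x + t) - u x))
        = ∫ t in Ioi (0:ℝ), φ |t| * (u (x - t) - u x) := by
      have h := integral_comp_neg_Ioi (0:ℝ) (fun t => φ |t| * (u (x + t) - u x))
      rw [neg_zero] at h
      rw [← h]
      congr 1; funext t
      rw [abs_neg, ← sub_eq_add_neg]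
    rw [step1, ← intervalIntegral.integral_Iic_add_Ioi (b := 0) hInt.integrableOn hInt.integrableOn, e2,
      ← integral_add hIntneg.integrableOn hInt.integrableOn]
    refine setIntegral_congr_fun measurableSet_Ioi fun t ht => ?_
    rw [abs_of_pos ht, Dop]
    ring
  have hswapcont : Continuous fun p : ℝ × ℝ => Dop u p.2 p.1 :=
    hDc.comp (continuous_snd.prodMk continuous_fst)
  have hLm : ∀ (φ : ℝ → ℝ), Measurable φ →
      StronglyMeasurable fun x => ∫ s in Ioi (0:ℝ), φ s * Dop u s x := by
    intro φ hm
    exact (((hm.comp measurable_snd).mul hswapcont.measurable).stronglyMeasurable).integral_prod_right'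
  have hLbound : ∀ (φ : ℝ → ℝ) (M : ℝ), Measurable φ → (∀ r, |φ r| ≤ M) →
      (∀ r, r ∉ Set.Icc 0 R₀ → φ r = 0) → ∀ x,
      |∫ s in Ioi (0:ℝ), φ s * Dop u s x| ≤ M * (4 * B) * (volume (Ioc (0:ℝ) R₀)).toReal := by
    intro φ M hm hMb hsφ x
    have hM0 : 0 ≤ M := (abs_nonneg _).trans (hMb 0)
    have hres : (∫ s in Ioi (0:ℝ), φ s * Dop u s x)
        = ∫ s in Ioc (0:ℝ) R₀, φ s * Dop u s x := by
      refine setIntegral_eq_of_subset_of_forall_diff_eq_zero measurableSet_Ioi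
        Ioc_subset_Ioi_self (fun s hs => ?_)
      have h1 : φ s = 0 := by
        refine hsφ _ (fun hc => ?_)
        rcases hs with ⟨hs1, hs2⟩
        rw [Set.mem_Ioc, not_and_or] at hs2
        rcases hs2 with h | h
        · exact h hs1
        · exact h hc.2
      rw [h1, zero_mul]
    rw [hres, ← Real.norm_eq_abs]
    refine norm_setIntegral_le_of_norm_le_const_ae' measure_Ioc_lt_top
      (Filter.Eventually.of_forall fun s _ => ?_)
    rw [Real.norm_eq_abs, abs_mul]
    exact mul_le_mul (hMb _) (hDb _ _) (abs_nonneg _) (by positivity)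
  set V : ℝ := (volume (Ioc (0:ℝ) R₀)).toReal with hVdef
  have hV0 : 0 ≤ V := ENNReal.toReal_nonneg
  -- membership helpers for boxes
  have hmemx : ∀ x : ℝ, x ∈ Icc (-(A + R₀)) (A + R₀) ↔ |x| ≤ A + R₀ := by
    intro x; rw [Set.mem_Icc, abs_le]
  -- Fubini swap no. 2 (inner, for each r)
  have hswap2 : ∀ r : ℝ,
      (∫ x, ∫ s in Ioi (0:ℝ), Dop u r x * (φ₂ s * Dop u s x))
        = ∫ s in Ioi (0:ℝ), ∫ x, Dop u r x * (φ₂ s * Dop u s x) := by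
    intro r
    refine integral_integral_swap ?_
    refine integrable_of_bound
      (s := Icc (-(A + R₀)) (A + R₀) ×ˢ Icc (0:ℝ) R₀)
      (measurableSet_Icc.prod measurableSet_Icc)
      (prod_box_ne_top measure_Icc_lt_top.ne (restrict_set_ne_top _ _ _))
      ((4 * B) * (M₂ * (4 * B)))
      ?_ ?_ ?_
    · refine Measurable.aestronglyMeasurable ?_
      have h1 : Measurable fun p : ℝ × ℝ => Dop u r p.1 :=
        (hDc.comp (continuous_const.prodMk continuous_fst)).measurable
      have h2 : Measurable fun p : ℝ × ℝ => φ₂ p.2 := hm₂.comp measurable_snd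
      have h3 : Measurable fun p : ℝ × ℝ => Dop u p.2 p.1 := hswapcont.measurable
      exact h1.mul (h2.mul h3)
    · rintro ⟨x, s⟩ _
      rw [Function.uncurry_apply_pair, Real.norm_eq_abs, abs_mul, abs_mul]
      refine mul_le_mul (hDb _ _) (mul_le_mul (hM₂ _) (hDb _ _) (abs_nonneg _) hM₂0)
        (by positivity) (by positivity)
    · rintro ⟨x, s⟩ hp
      rw [Set.mem_prod, not_and_or] at hp
      rw [Function.uncurry_apply_pair]
      rcases hp with hx | hs
      · by_cases hsmem : s ∈ Icc (0:ℝ) R₀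
        · have : Dop u s x = 0 := by
            refine hDz s x ?_ ?_
            · rw [abs_of_nonneg hsmem.1]; exact hsmem.2
            · exact lt_of_not_ge (fun h => hx ((hmemx x).mpr h))
          rw [this, mul_zero, mul_zero]
        · rw [hs₂ s hsmem, zero_mul, mul_zero]
      · rw [hs₂ s hs, zero_mul, mul_zero]
  -- Fubini swap no. 1 (outer)
  have hswap1 :
      (∫ x, ∫ r in Ioi (0:ℝ), (φ₁ r * Dop u r x) * (∫ s in Ioi (0:ℝ), φ₂ s * Dop u s x))
        = ∫ r in Ioi (0:ℝ), ∫ x, (φ₁ r * Dop u r x) * (∫ s in Ioi (0:ℝ), φ₂ s * Dop u s x) := by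
    refine integral_integral_swap ?_
    refine integrable_of_bound
      (s := Icc (-(A + R₀)) (A + R₀) ×ˢ Icc (0:ℝ) R₀)
      (measurableSet_Icc.prod measurableSet_Icc)
      (prod_box_ne_top measure_Icc_lt_top.ne (restrict_set_ne_top _ _ _))
      ((M₁ * (4 * B)) * (M₂ * (4 * B) * V)) ?_ ?_ ?_
    · refine Measurable.aestronglyMeasurable ?_
      exact (((hm₁.comp measurable_snd).mul hswapcont.measurable).mul
        ((hLm φ₂ hm₂).measurable.comp measurable_fst))
    · rintro ⟨x, r⟩ _
      rw [Function.uncurry_apply_pair, Real.norm_eq_abs, abs_mul, abs_mul]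
      refine mul_le_mul (mul_le_mul (hM₁ _) (hDb _ _) (abs_nonneg _) hM₁0)
        (hLbound φ₂ M₂ hm₂ hM₂ hs₂ x) (abs_nonneg _) (by positivity)
    · rintro ⟨x, r⟩ hp
      rw [Set.mem_prod, not_and_or] at hp
      rw [Function.uncurry_apply_pair]
      rcases hp with hx | hr
      · by_cases hrmem : r ∈ Icc (0:ℝ) R₀
        · have : Dop u r x = 0 := by
            refine hDz r x ?_ (lt_of_not_ge (fun h => hx ((hmemx x).mpr h)))
            rw [abs_of_nonneg hrmem.1]; exact hrmem.2
          rw [this, mul_zero, zero_mul]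
        · rw [hs₁ r hrmem, zero_mul, zero_mul]
      · rw [hs₁ r hr, zero_mul, zero_mul]
  -- measurability of the kernel
  have hKm : StronglyMeasurable fun p : ℝ × ℝ => ∫ x, Dop u p.1 x * Dop u p.2 x := by
    have hc : Continuous fun q : (ℝ × ℝ) × ℝ => Dop u q.1.1 q.2 * Dop u q.1.2 q.2 :=
      (hDc.comp ((continuous_fst.comp continuous_fst).prodMk continuous_snd)).mul
        (hDc.comp ((continuous_snd.comp continuous_fst).prodMk continuous_snd))
    exact hc.stronglyMeasurable.integral_prod_right'
  -- bound for the kernel on the box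
  have hKb : ∀ p : ℝ × ℝ, p ∈ Icc (0:ℝ) R₀ ×ˢ Icc (0:ℝ) R₀ →
      |∫ x, Dop u p.1 x * Dop u p.2 x|
        ≤ (4 * B * (4 * B)) * (volume (Icc (-(A + R₀)) (A + R₀))).toReal := by
    rintro ⟨r, s⟩ hp
    rw [Set.mem_prod] at hp
    have hres : (∫ x, Dop u r x * Dop u s x)
        = ∫ x in Icc (-(A + R₀)) (A + R₀), Dop u r x * Dop u s x := by
      refine (setIntegral_eq_integral_of_forall_compl_eq_zero fun x hx => ?_).symm
      have hd : Dop u r x = 0 := by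
        refine hDz r x ?_ (lt_of_not_ge (fun h => hx ((hmemx x).mpr h)))
        rw [abs_of_nonneg hp.1.1]; exact hp.1.2
      rw [hd, zero_mul]
    rw [hres, ← Real.norm_eq_abs]
    refine norm_setIntegral_le_of_norm_le_const_ae' measure_Icc_lt_top
      (Filter.Eventually.of_forall fun x _ => ?_)
    rw [Real.norm_eq_abs, abs_mul]
    exact mul_le_mul (hDb _ _) (hDb _ _) (abs_nonneg _) (by positivity)
  -- integrability part
  have hint : Integrable (fun p : ℝ × ℝ => φ₁ p.1 * φ₂ p.2 * ∫ x, Dop u p.1 x * Dop u p.2 x)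
      ((volume.restrict (Ioi 0)).prod (volume.restrict (Ioi 0))) := by
    refine integrable_of_bound (s := Icc (0:ℝ) R₀ ×ˢ Icc (0:ℝ) R₀)
      (measurableSet_Icc.prod measurableSet_Icc)
      (prod_box_ne_top (restrict_set_ne_top _ _ _) (restrict_set_ne_top _ _ _))
      (M₁ * M₂ * ((4 * B * (4 * B)) * (volume (Icc (-(A + R₀)) (A + R₀))).toReal)) ?_ ?_ ?_
    · exact (((hm₁.comp measurable_fst).mul (hm₂.comp measurable_snd)).mul
        hKm.measurable).aestronglyMeasurable
    · rintro ⟨r, s⟩ hp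
      rw [Real.norm_eq_abs, abs_mul, abs_mul]
      refine mul_le_mul (mul_le_mul (hM₁ _) (hM₂ _) (abs_nonneg _) hM₁0)
        (hKb _ hp) (abs_nonneg _) (by positivity)
    · rintro ⟨r, s⟩ hp
      rw [Set.mem_prod, not_and_or] at hp
      rcases hp with h | h
      · rw [hs₁ _ h, zero_mul, zero_mul]
      · rw [hs₂ _ h, mul_zero, zero_mul]
  refine ⟨hint, ?_⟩
  -- the identity, via the two Fubini swaps
  calc (∫ x, Lop φ₁ u x * Lop φ₂ u x)
      = ∫ x, (∫ r in Ioi (0:ℝ), φ₁ r * Dop u r x) * (∫ s in Ioi (0:ℝ), φ₂ s * Dop u s x) := by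
        congr 1; funext x
        rw [hrepr φ₁ M₁ hm₁ hM₁ hs₁ x, hrepr φ₂ M₂ hm₂ hM₂ hs₂ x]
    _ = ∫ x, ∫ r in Ioi (0:ℝ), (φ₁ r * Dop u r x) * (∫ s in Ioi (0:ℝ), φ₂ s * Dop u s x) := by
        congr 1; funext x
        rw [← integral_mul_const]
    _ = ∫ r in Ioi (0:ℝ), ∫ x, (φ₁ r * Dop u r x) * (∫ s in Ioi (0:ℝ), φ₂ s * Dop u s x) :=
        hswap1
    _ = ∫ r in Ioi (0:ℝ), φ₁ r * ∫ x, Dop u r x * (∫ s in Ioi (0:ℝ), φ₂ s * Dop u s x) := by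
        congr 1; funext r
        simp_rw [mul_assoc]
        rw [integral_const_mul]
    _ = ∫ r in Ioi (0:ℝ), φ₁ r * ∫ s in Ioi (0:ℝ), φ₂ s * ∫ x, Dop u r x * Dop u s x := by
        congr 1; funext r
        congr 1
        calc (∫ x, Dop u r x * (∫ s in Ioi (0:ℝ), φ₂ s * Dop u s x))
            = ∫ x, ∫ s in Ioi (0:ℝ), Dop u r x * (φ₂ s * Dop u s x) := by
              congr 1; funext x
              rw [integral_const_mul]
          _ = ∫ s in Ioi (0:ℝ), ∫ x, Dop u r x * (φ₂ s * Dop u s x) := hswap2 r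
          _ = ∫ s in Ioi (0:ℝ), φ₂ s * ∫ x, Dop u r x * Dop u s x := by
              congr 1; funext s
              simp_rw [mul_left_comm]
              rw [integral_const_mul]
    _ = ∫ r in Ioi (0:ℝ), ∫ s in Ioi (0:ℝ), φ₁ r * φ₂ s * ∫ x, Dop u r x * Dop u s x := by
        congr 1; funext r
        rw [← integral_const_mul]
        congr 1; funext s
        ring

/-- The bilinear form of 1D nonlocal operators equals the double integral of the kernel `G`. -/
theorem bilinear_eq_double_integral_1D (R₀ : ℝ) (hR₀ : 0 < R₀)
    (N : ℕ) (hN : 0 < N) (u : Fin N → ℝ → ℝ)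
    (hu : ∀ i, Continuous (u i)) (hcs : ∀ i, HasCompactSupport (u i))
    (φ₁ φ₂ : ℝ → ℝ)
    (hm₁ : Measurable φ₁) (hm₂ : Measurable φ₂)
    (hb₁ : ∃ M, ∀ r, |φ₁ r| ≤ M) (hb₂ : ∃ M, ∀ r, |φ₂ r| ≤ M)
    (hs₁ : ∀ r, r ∉ Set.Icc 0 R₀ → φ₁ r = 0) (hs₂ : ∀ r, r ∉ Set.Icc 0 R₀ → φ₂ r = 0) :
    (N : ℝ)⁻¹ * ∑ k, ∫ x, Lop φ₁ (u k) x * Lop φ₂ (u k) x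
      = ∫ r in Set.Ioi (0 : ℝ), ∫ s in Set.Ioi (0 : ℝ), φ₁ r * φ₂ s * Gker N u r s := by
  classical
  have hk := fun k => perk R₀ hR₀ (u k) (hu k) (hcs k) φ₁ φ₂ hm₁ hm₂ hb₁ hb₂ hs₁ hs₂
  set ν := volume.restrict (Ioi (0:ℝ)) with hν
  -- pointwise identity between the Gker integrand and the sum of per-k integrands
  have hpt : ∀ p : ℝ × ℝ, φ₁ p.1 * φ₂ p.2 * Gker N u p.1 p.2
      = (N : ℝ)⁻¹ * ∑ k, φ₁ p.1 * φ₂ p.2 * (∫ x, Dop (u k) p.1 x * Dop (u k) p.2 x) := by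
    intro p
    simp only [Gker, Dop, ← Finset.mul_sum]
    ring
  -- integrability of the summed integrand
  have hsumint : Integrable (fun p : ℝ × ℝ =>
      (N : ℝ)⁻¹ * ∑ k, φ₁ p.1 * φ₂ p.2 * (∫ x, Dop (u k) p.1 x * Dop (u k) p.2 x))
      (ν.prod ν) :=
    (integrable_finset_sum _ (fun k _ => (hk k).1)).const_mul _
  have hGint : Integrable (fun p : ℝ × ℝ => φ₁ p.1 * φ₂ p.2 * Gker N u p.1 p.2) (ν.prod ν) :=
    hsumint.congr (Filter.Eventually.of_forall fun p => (hpt p).symm)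
  calc (N : ℝ)⁻¹ * ∑ k, ∫ x, Lop φ₁ (u k) x * Lop φ₂ (u k) x
      = (N : ℝ)⁻¹ * ∑ k, ∫ p : ℝ × ℝ,
          φ₁ p.1 * φ₂ p.2 * (∫ x, Dop (u k) p.1 x * Dop (u k) p.2 x) ∂(ν.prod ν) := by
        congr 1
        refine Finset.sum_congr rfl fun k _ => ?_
        rw [(hk k).2, ← integral_prod _ (hk k).1]
    _ = ∫ p : ℝ × ℝ, (N : ℝ)⁻¹ * ∑ k,
          φ₁ p.1 * φ₂ p.2 * (∫ x, Dop (u k) p.1 x * Dop (u k) p.2 x) ∂(ν.prod ν) := by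
        rw [MeasureTheory.integral_const_mul, integral_finset_sum _ (fun k _ => (hk k).1)]
    _ = ∫ p : ℝ × ℝ, φ₁ p.1 * φ₂ p.2 * Gker N u p.1 p.2 ∂(ν.prod ν) :=
        integral_congr_ae (Filter.Eventually.of_forall fun p => (hpt p).symm)
    _ = ∫ r in Set.Ioi (0 : ℝ), ∫ s in Set.Ioi (0 : ℝ), φ₁ r * φ₂ s * Gker N u r s :=
        integral_prod _ hGint
end
end

section
/- For all φ, ψ ∈ L²(ρ), ⟨L_Ḡ φ, ψ⟩_{L²(ρ)} = (1/N) Σ_{k=1}^N ∫_ℝ L_φ[u_k](x) · L_ψ[u_k](x) dx. -/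
open MeasureTheory Set
open scoped BigOperators RealInnerProductSpace ENNReal NNReal

noncomputable section

/-- The reweighted kernel `Ḡ(r,s) = G(r,s) / (p(r) p(s))`. -/
def Gbar (N : ℕ) (u : Fin N → ℝ → ℝ) (p : ℝ → ℝ) (r s : ℝ) : ℝ :=
  Gker N u r s / (p r * p s)

/-- The nonlocal operator `L_φ[u]` for `φ ∈ L²(ρ)`, using the canonical representative of `φ`
extended by zero outside `[0,R₀]`. -/
def LopLp (R₀ : ℝ) {ρ : Measure ℝ} (φ : Lp ℝ 2 ρ) (u : ℝ → ℝ) (x : ℝ) : ℝ :=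
  ∫ y, (Set.Icc 0 R₀).indicator (φ : ℝ → ℝ) |y - x| * (u y - u x)

namespace LGAux

lemma abs_integrable {f : ℝ → ℝ} (hfi : Integrable f (volume : Measure ℝ)) :
    Integrable (fun z => f |z|) (volume : Measure ℝ) := by
  have h1 : IntegrableOn (fun z => f |z|) (Ici 0) volume := by
    apply (hfi.integrableOn (s := Ici 0)).congr_fun ?_ measurableSet_Ici
    intro z hz; simp [abs_of_nonneg (mem_Ici.mp hz)]
  have h2 : IntegrableOn (fun z => f |z|) (Iio 0) volume := by
    have : Integrable (fun z => f (-z)) (volume : Measure ℝ) := hfi.comp_neg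
    apply (this.integrableOn (s := Iio 0)).congr_fun ?_ measurableSet_Iio
    intro z hz; simp [abs_of_neg (mem_Iio.mp hz)]
  have := h2.union h1
  rwa [Iio_union_Ici, integrableOn_univ] at this

lemma lop_change (R₀ : ℝ) (f : ℝ → ℝ)
    (hsupp : ∀ r, r ∉ Set.Icc (0:ℝ) R₀ → f r = 0)
    (hfi : Integrable f (volume : Measure ℝ))
    (u : ℝ → ℝ) (hu : Continuous u) (C : ℝ) (hC : ∀ z, |u z| ≤ C) (x : ℝ) :
    ∫ y, f |y - x| * (u y - u x) = ∫ r, f r * (u (x + r) + u (x - r) - 2 * u x) := by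
  have hC0 : (0:ℝ) ≤ C := (abs_nonneg _).trans (hC 0)
  have habs := abs_integrable hfi
  have bdd_mul : ∀ (F g : ℝ → ℝ), Integrable F (volume : Measure ℝ) → Continuous g →
      (∀ z, |g z| ≤ 4*C) → Integrable (fun z => F z * g z) (volume : Measure ℝ) := by
    intro F g hFi hgc hgb
    have h := hFi.bdd_mul (c := 4*C) (f := g) hgc.aestronglyMeasurable
      (by filter_upwards with z; exact hgb z)
    simpa [mul_comm] using h
  have hbu : ∀ a b : ℝ, |u a - u b| ≤ 4*C := by
    intro a b
    have := hC a; have := hC b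
    have h1 : |u a - u b| ≤ |u a| + |u b| := abs_sub _ _
    linarith
  have hbu2 : ∀ a b c : ℝ, |u a + u b - 2 * u c| ≤ 4*C := by
    intro a b c
    have := hC a; have := hC b; have := hC c
    have h1 : |u a + u b - 2 * u c| ≤ |u a| + |u b| + 2 * |u c| := by
      calc |u a + u b - 2 * u c| ≤ |u a + u b| + |2 * u c| := abs_sub _ _
        _ ≤ |u a| + |u b| + 2 * |u c| := by
            have := abs_add_le (u a) (u b)
            rw [abs_mul]; simp only [Nat.abs_ofNat]; linarith
    linarith
  have hg : Integrable (fun z => f |z| * (u (x + z) - u x)) (volume : Measure ℝ) :=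
    bdd_mul _ _ habs ((hu.comp (continuous_const.add continuous_id)).sub continuous_const)
      (fun z => hbu _ _)
  have hgm : Integrable (fun r => f r * (u (x - r) - u x)) (volume : Measure ℝ) :=
    bdd_mul _ _ hfi ((hu.comp (continuous_const.sub continuous_id)).sub continuous_const)
      (fun z => hbu _ _)
  have hgp : Integrable (fun r => f r * (u (x + r) - u x)) (volume : Measure ℝ) :=
    bdd_mul _ _ hfi ((hu.comp (continuous_const.add continuous_id)).sub continuous_const)
      (fun z => hbu _ _)
  have hgD : Integrable (fun r => f r * (u (x + r) + u (x - r) - 2 * u x)) (volume : Measure ℝ) :=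
    bdd_mul _ _ hfi (((hu.comp (continuous_const.add continuous_id)).add
      (hu.comp (continuous_const.sub continuous_id))).sub continuous_const)
      (fun z => hbu2 _ _ _)
  have step1 : (∫ y, f |y - x| * (u y - u x)) = ∫ z, f |z| * (u (x + z) - u x) := by
    rw [← integral_add_right_eq_self (μ := volume) (fun y => f |y - x| * (u y - u x)) x]
    congr 1; funext z
    simp [add_sub_cancel_right, add_comm]
  have e1 : (∫ z in Iic (0:ℝ), f |z| * (u (x + z) - u x)) =
      ∫ r in Ioi (0:ℝ), f r * (u (x - r) - u x) := by
    have hcongr : EqOn (fun z => f |z| * (u (x + z) - u x))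
        (fun z => (fun r => f r * (u (x - r) - u x)) (-z)) (Iic (0:ℝ)) := by
      intro z hz
      simp only [abs_of_nonpos (mem_Iic.mp hz), sub_neg_eq_add]
    rw [setIntegral_congr_fun measurableSet_Iic hcongr]
    have := integral_comp_neg_Iic (0:ℝ) (fun r => f r * (u (x - r) - u x))
    simpa using this
  have e2 : (∫ z in Ioi (0:ℝ), f |z| * (u (x + z) - u x)) =
      ∫ r in Ioi (0:ℝ), f r * (u (x + r) - u x) := by
    apply setIntegral_congr_fun measurableSet_Ioi
    intro z hz; simp [abs_of_pos (mem_Ioi.mp hz)]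
  have rhs : (∫ r, f r * (u (x + r) + u (x - r) - 2 * u x)) =
      ∫ r in Ioi (0:ℝ), f r * (u (x + r) + u (x - r) - 2 * u x) := by
    rw [← intervalIntegral.integral_Iio_add_Ici (b := (0:ℝ)) hgD.integrableOn hgD.integrableOn,
      integral_Ici_eq_integral_Ioi]
    have : (∫ r in Iio (0:ℝ), f r * (u (x + r) + u (x - r) - 2 * u x)) = 0 := by
      apply setIntegral_eq_zero_of_forall_eq_zero
      intro r hr
      rw [hsupp r (by simp [Set.mem_Icc]; intro h; exact absurd h (not_le.mpr (mem_Iio.mp hr)))]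
      ring
    rw [this, zero_add]
  rw [step1, ← intervalIntegral.integral_Iic_add_Ioi hg.integrableOn hg.integrableOn, e1, e2,
    rhs, ← integral_add hgm.integrableOn hgp.integrableOn]
  congr 1; funext r; ring

lemma swap_aux {f : ℝ → ℝ → ℝ} {g₁ g₂ : ℝ → ℝ}
    (hf : AEStronglyMeasurable (fun z : ℝ × ℝ => f z.1 z.2) ((volume : Measure ℝ).prod volume))
    (hg₁ : Integrable g₁ (volume : Measure ℝ)) (hg₂ : Integrable g₂ (volume : Measure ℝ))
    (hbd : ∀ x y, |f x y| ≤ g₁ x * g₂ y) :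
    ∫ x, ∫ y, f x y = ∫ y, ∫ x, f x y := by
  refine integral_integral_swap ?_
  have huc : Function.uncurry f = fun z : ℝ × ℝ => f z.1 z.2 := rfl
  rw [huc]
  refine Integrable.mono' (hg₁.mul_prod hg₂) hf ?_
  exact Filter.Eventually.of_forall fun z => by
    simpa [Real.norm_eq_abs] using hbd z.1 z.2

lemma int_abs_le {f g : ℝ → ℝ} (hg : Integrable g (volume : Measure ℝ))
    (h : ∀ y, |f y| ≤ g y) : |∫ y, f y| ≤ ∫ y, g y := by
  rw [← Real.norm_eq_abs]
  refine norm_integral_le_of_norm_le hg (Filter.Eventually.of_forall fun y => ?_)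
  rw [Real.norm_eq_abs]; exact h y

end LGAux

/-- `⟨L_Ḡ φ, ψ⟩_{L²(ρ)}` equals the data-based bilinear form of the nonlocal operators. -/
theorem inner_LG_eq_bilinear (R₀ : ℝ) (hR₀ : 0 < R₀)
    (N : ℕ) (hN : 0 < N) (u : Fin N → ℝ → ℝ)
    (hu : ∀ i, Continuous (u i)) (hcs : ∀ i, HasCompactSupport (u i))
    (p : ℝ → ℝ) (hpc : ContinuousOn p (Set.Icc 0 R₀)) (hpp : ∀ r ∈ Set.Icc 0 R₀, 0 < p r)
    (ρ : Measure ℝ) [IsProbabilityMeasure ρ]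
    (hρ : ρ = (volume.restrict (Set.Icc 0 R₀)).withDensity fun r => ENNReal.ofReal (p r))
    (φ ψ : Lp ℝ 2 ρ) (Tφ : Lp ℝ 2 ρ)
    (hTφ : (Tφ : ℝ → ℝ) =ᵐ[ρ] fun r => ∫ s, (φ : ℝ → ℝ) s * Gbar N u p r s ∂ρ) :
    ⟪Tφ, ψ⟫ = (N : ℝ)⁻¹ * ∑ k, ∫ x, LopLp R₀ φ (u k) x * LopLp R₀ ψ (u k) x := by
  classical
  have hIcc : MeasurableSet (Icc (0:ℝ) R₀) := measurableSet_Icc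
  set μ0 : Measure ℝ := volume.restrict (Icc 0 R₀) with hμ0
  -- uniform bound on the data
  obtain ⟨C, hC0, hC⟩ : ∃ C : ℝ, 0 ≤ C ∧ ∀ i z, |u i z| ≤ C := by
    have h : ∀ i : Fin N, ∃ Ci : ℝ, ∀ z, |u i z| ≤ Ci := by
      intro i
      obtain ⟨Ci, hCi⟩ := (hcs i).exists_bound_of_continuous (hu i)
      exact ⟨Ci, fun z => by simpa [Real.norm_eq_abs] using hCi z⟩
    choose Cf hCf using h
    refine ⟨∑ i, |Cf i|, Finset.sum_nonneg fun i _ => abs_nonneg _, fun i z => ?_⟩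
    calc |u i z| ≤ Cf i := hCf i z
      _ ≤ |Cf i| := le_abs_self _
      _ ≤ ∑ j, |Cf j| := Finset.single_le_sum (fun j _ => abs_nonneg (Cf j)) (Finset.mem_univ i)
  -- uniform compact support
  obtain ⟨A, hA0, hA⟩ : ∃ A : ℝ, 0 ≤ A ∧ ∀ i z, A < |z| → u i z = 0 := by
    have h : ∀ i : Fin N, ∃ Ai : ℝ, tsupport (u i) ⊆ Metric.closedBall 0 Ai := fun i =>
      (hcs i).isBounded.subset_closedBall 0
    choose Af hAf using h
    refine ⟨∑ i, |Af i|, Finset.sum_nonneg fun i _ => abs_nonneg _, fun i z hz => ?_⟩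
    apply image_eq_zero_of_notMem_tsupport
    intro hmem
    have h1 : |z| ≤ Af i := by simpa [Real.norm_eq_abs] using hAf i hmem
    have h2 : Af i ≤ ∑ j, |Af j| :=
      le_trans (le_abs_self _) (Finset.single_le_sum (fun j _ => abs_nonneg (Af j))
        (Finset.mem_univ i))
    linarith
  set K : Set ℝ := Icc (-(A + R₀)) (A + R₀) with hK
  have hKm : MeasurableSet K := measurableSet_Icc
  have hKvol : volume K < ⊤ := by
    rw [hK, Real.volume_Icc]; exact ENNReal.ofReal_lt_top
  -- difference operator
  set D : Fin N → ℝ → ℝ → ℝ := fun i r x => u i (x + r) + u i (x - r) - 2 * u i x with hD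
  have hDc : ∀ i, Continuous (fun q : ℝ × ℝ => D i q.1 q.2) := by
    intro i
    apply Continuous.sub
    · exact ((hu i).comp (continuous_snd.add continuous_fst)).add
        ((hu i).comp (continuous_snd.sub continuous_fst))
    · exact continuous_const.mul ((hu i).comp continuous_snd)
  have hDb : ∀ i r x, |D i r x| ≤ 4 * C := by
    intro i r x
    have h1 := hC i (x + r); have h2 := hC i (x - r); have h3 := hC i x
    have : |u i (x+r) + u i (x-r) - 2 * u i x| ≤ |u i (x+r)| + |u i (x-r)| + 2 * |u i x| := by
      calc |u i (x+r) + u i (x-r) - 2 * u i x| ≤ |u i (x+r) + u i (x-r)| + |2 * u i x| :=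
            abs_sub _ _
        _ ≤ |u i (x+r)| + |u i (x-r)| + 2 * |u i x| := by
            have := abs_add_le (u i (x+r)) (u i (x-r))
            rw [abs_mul]; simp only [Nat.abs_ofNat]; linarith
    simpa [hD] using this.trans (by linarith)
  have hD0 : ∀ i r x, r ∈ Icc (0:ℝ) R₀ → x ∉ K → D i r x = 0 := by
    intro i r x hr hx
    have hxa : A + R₀ < |x| := by
      by_contra h
      exact hx (by rw [hK]; exact abs_le.mp (not_lt.mp h))
    obtain ⟨hr0, hrR⟩ := hr
    have habs : |r| ≤ R₀ := by rw [abs_of_nonneg hr0]; exact hrR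
    have z1 : u i (x + r) = 0 := by
      apply hA i; have : |x| - |r| ≤ |x + r| := by
        have := abs_sub_abs_le_abs_sub x (-r); simpa [sub_neg_eq_add] using this
      linarith
    have z2 : u i (x - r) = 0 := by
      apply hA i; have : |x| - |r| ≤ |x - r| := abs_sub_abs_le_abs_sub x r
      linarith
    have z3 : u i x = 0 := by apply hA i; linarith
    simp [hD, z1, z2, z3]
  -- density facts
  set pn : ℝ → ℝ≥0 := fun r => Real.toNNReal (p r) with hpn
  have hpm : AEMeasurable p (volume.restrict (Icc (0:ℝ) R₀)) := hpc.aemeasurable hIcc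
  have hpnm : AEMeasurable pn (volume.restrict (Icc (0:ℝ) R₀)) :=
    measurable_real_toNNReal.comp_aemeasurable hpm
  have hρ' : ρ = (volume.restrict (Icc (0:ℝ) R₀)).withDensity (fun r => (pn r : ℝ≥0∞)) := by
    rw [hρ]; rfl
  have hconv : ∀ F : ℝ → ℝ,
      ∫ a, F a ∂ρ = ∫ a in Icc (0:ℝ) R₀, ((pn a : ℝ) * F a) := by
    intro F
    rw [hρ', integral_withDensity_eq_integral_smul₀ hpnm F]
    simp [NNReal.smul_def]
  have hac2 : volume.restrict (Icc (0:ℝ) R₀) ≪ ρ := by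
    rw [hρ']
    refine Measure.AbsolutelyContinuous.mk (fun S hS hS0 => ?_)
    rw [withDensity_apply _ hS,
      lintegral_eq_zero_iff' (hpnm.coe_nnreal_ennreal.restrict)] at hS0
    have hpos : ∀ᵐ r ∂(volume.restrict (Icc (0:ℝ) R₀)).restrict S, 0 < p r :=
      ae_restrict_of_ae ((ae_restrict_mem hIcc).mono fun r hr => hpp r hr)
    have hFalse : ∀ᵐ r ∂(volume.restrict (Icc (0:ℝ) R₀)).restrict S, False := by
      filter_upwards [hS0, hpos] with r h1 h2
      simp only [Pi.zero_apply, ENNReal.coe_eq_zero, hpn, Real.toNNReal_eq_zero] at h1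
      linarith
    have huniv : (volume.restrict (Icc (0:ℝ) R₀)).restrict S univ = 0 := by
      rw [ae_iff] at hFalse; simpa using hFalse
    rwa [Measure.restrict_apply_univ] at huniv
  -- integrability of the canonical representatives
  obtain ⟨r₀, hr₀, hrmin'⟩ := isCompact_Icc.exists_isMinOn (nonempty_Icc.mpr hR₀.le) hpc
  have hrmin : ∀ r ∈ Icc (0:ℝ) R₀, p r₀ ≤ p r := fun r hr => hrmin' hr
  have hc : 0 < p r₀ := hpp r₀ hr₀
  have hkey : ∀ ξ : Lp ℝ 2 ρ, Integrable ((Icc (0:ℝ) R₀).indicator (ξ : ℝ → ℝ)) volume := by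
    intro ξ
    have hξρ0 : Integrable (ξ : ℝ → ℝ) ρ := MemLp.integrable one_le_two (Lp.memLp ξ)
    have hξρ : Integrable (fun r => pn r • (ξ : ℝ → ℝ) r) (volume.restrict (Icc (0:ℝ) R₀)) := by
      rw [← integrable_withDensity_iff_integrable_smul₀ hpnm, ← hρ']; exact hξρ0
    have hξm0 : AEStronglyMeasurable (ξ : ℝ → ℝ) (volume.restrict (Icc (0:ℝ) R₀)) :=
      AEStronglyMeasurable.mono_ac hac2 (Lp.aestronglyMeasurable ξ)
    have hξ0 : Integrable (ξ : ℝ → ℝ) (volume.restrict (Icc (0:ℝ) R₀)) := by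
      refine Integrable.mono' (g := fun r => (p r₀)⁻¹ * ‖pn r • (ξ : ℝ → ℝ) r‖)
        (hξρ.norm.const_mul _) hξm0 ?_
      filter_upwards [ae_restrict_mem hIcc] with r hr
      have hpr : p r₀ ≤ p r := hrmin r hr
      have h0 : (0:ℝ) ≤ p r := (hpp r hr).le
      have hnorm : ‖pn r • (ξ : ℝ → ℝ) r‖ = p r * ‖(ξ : ℝ → ℝ) r‖ := by
        rw [NNReal.smul_def, norm_smul, Real.norm_eq_abs, abs_of_nonneg (pn r).coe_nonneg]
        congr 1
        simp [hpn, Real.coe_toNNReal _ h0]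
      rw [hnorm]
      have ht : (0:ℝ) ≤ ‖(ξ : ℝ → ℝ) r‖ := norm_nonneg _
      calc ‖(ξ : ℝ → ℝ) r‖ = (p r₀)⁻¹ * (p r₀ * ‖(ξ : ℝ → ℝ) r‖) := by
            field_simp
        _ ≤ (p r₀)⁻¹ * (p r * ‖(ξ : ℝ → ℝ) r‖) :=
            mul_le_mul_of_nonneg_left (mul_le_mul_of_nonneg_right hpr ht)
              (inv_nonneg.mpr hc.le)
    rwa [integrable_indicator_iff hIcc]
  set Φ : ℝ → ℝ := (Icc (0:ℝ) R₀).indicator ((φ : ℝ → ℝ)) with hΦdef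
  set Ψ : ℝ → ℝ := (Icc (0:ℝ) R₀).indicator ((ψ : ℝ → ℝ)) with hΨdef
  have hΦi : Integrable Φ volume := hkey φ
  have hΨi : Integrable Ψ volume := hkey ψ
  have hΦm : AEStronglyMeasurable Φ volume := hΦi.aestronglyMeasurable
  have hΨm : AEStronglyMeasurable Ψ volume := hΨi.aestronglyMeasurable
  have hΦsupp : ∀ r, r ∉ Icc (0:ℝ) R₀ → Φ r = 0 := fun r hr => indicator_of_notMem hr _
  have hΨsupp : ∀ r, r ∉ Icc (0:ℝ) R₀ → Ψ r = 0 := fun r hr => indicator_of_notMem hr _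
  -- bounds and integrals
  set IΦ : ℝ := ∫ s, |Φ s| with hIΦdef
  set VK : ℝ := (volume K).toReal with hVKdef
  have hVK0 : (0:ℝ) ≤ VK := ENNReal.toReal_nonneg
  have hIΦ0 : (0:ℝ) ≤ IΦ := integral_nonneg fun s => abs_nonneg _
  have hKind : ∀ c : ℝ, Integrable (K.indicator (fun _ => c)) volume := by
    intro c
    rw [integrable_indicator_iff hKm]
    exact integrableOn_const hKvol.ne
  have hKint : ∀ c : ℝ, (∫ x, K.indicator (fun _ => c) x) = c * VK := by
    intro c
    rw [integral_indicator hKm, setIntegral_const, smul_eq_mul, hVKdef, mul_comm]; rfl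
  set ci : Fin N → ℝ → ℝ → ℝ := fun i r s => ∫ x, D i r x * D i s x with hci
  set CK : ℝ := 4 * C * (4 * C) * VK with hCK
  have hCK0 : (0:ℝ) ≤ CK := by positivity
  have hciM : ∀ i r s, r ∈ Icc (0:ℝ) R₀ ∨ s ∈ Icc (0:ℝ) R₀ → |ci i r s| ≤ CK := by
    intro i r s hrs
    have hb : ∀ x, |D i r x * D i s x| ≤ K.indicator (fun _ => 4 * C * (4 * C)) x := by
      intro x
      by_cases hx : x ∈ K
      · rw [indicator_of_mem hx, abs_mul]
        exact mul_le_mul (hDb i r x) (hDb i s x) (abs_nonneg _) (by positivity)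
      · rw [indicator_of_notMem hx]
        rcases hrs with h | h
        · rw [hD0 i r x h hx, zero_mul, abs_zero]
        · rw [hD0 i s x h hx, mul_zero, abs_zero]
    have := LGAux.int_abs_le (hKind (4 * C * (4 * C))) hb
    rw [hKint] at this
    simpa [hci, hCK] using this
  have hcimm : ∀ i, AEStronglyMeasurable (fun q : ℝ × ℝ => ci i q.1 q.2)
      ((volume : Measure ℝ).prod volume) := by
    intro i
    have hcont : Continuous (fun z : (ℝ × ℝ) × ℝ => D i z.1.1 z.2 * D i z.1.2 z.2) := by
      exact ((hDc i).comp ((continuous_fst.comp continuous_fst).prodMk continuous_snd)).mul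
        ((hDc i).comp ((continuous_snd.comp continuous_fst).prodMk continuous_snd))
    exact hcont.aestronglyMeasurable.integral_prod_right'
  have hcimr : ∀ i r, AEStronglyMeasurable (fun s => ci i r s) volume := by
    intro i r
    have hcont : Continuous (fun z : ℝ × ℝ => D i r z.2 * D i z.1 z.2) :=
      ((hDc i).comp (continuous_const.prodMk continuous_snd)).mul
        ((hDc i).comp (continuous_fst.prodMk continuous_snd))
    exact hcont.aestronglyMeasurable.integral_prod_right'
  -- the nonlocal operators as integrals against D
  set LΦ : Fin N → ℝ → ℝ := fun i x => ∫ s, Φ s * D i s x with hLΦ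
  set LΨ : Fin N → ℝ → ℝ := fun i x => ∫ r, Ψ r * D i r x with hLΨ
  have hLm : ∀ (Ξ : ℝ → ℝ), AEStronglyMeasurable Ξ volume →
      ∀ i, AEStronglyMeasurable (fun x => ∫ s, Ξ s * D i s x) volume := by
    intro Ξ hΞ i
    have : AEStronglyMeasurable (fun z : ℝ × ℝ => Ξ z.2 * D i z.2 z.1)
        ((volume : Measure ℝ).prod volume) :=
      hΞ.comp_snd.mul ((hDc i).comp continuous_swap).aestronglyMeasurable
    exact this.integral_prod_right'
  have hLΦm : ∀ i, AEStronglyMeasurable (LΦ i) volume := hLm Φ hΦm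
  have hLΨm : ∀ i, AEStronglyMeasurable (LΨ i) volume := hLm Ψ hΨm
  have hL0 : ∀ (Ξ : ℝ → ℝ), (∀ r, r ∉ Icc (0:ℝ) R₀ → Ξ r = 0) →
      ∀ i x, x ∉ K → (∫ s, Ξ s * D i s x) = 0 := by
    intro Ξ hΞs i x hx
    have : (fun s => Ξ s * D i s x) = fun _ => (0:ℝ) := by
      funext s
      by_cases hs : s ∈ Icc (0:ℝ) R₀
      · rw [hD0 i s x hs hx, mul_zero]
      · rw [hΞs s hs, zero_mul]
    rw [this, integral_zero]
  have hLb : ∀ (Ξ : ℝ → ℝ), Integrable Ξ volume →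
      ∀ i x, |∫ s, Ξ s * D i s x| ≤ (∫ s, |Ξ s|) * (4 * C) := by
    intro Ξ hΞi i x
    have h := LGAux.int_abs_le (f := fun s => Ξ s * D i s x)
      (g := fun s => |Ξ s| * (4 * C)) (hΞi.abs.mul_const _) (fun s => by
        rw [abs_mul]
        exact mul_le_mul_of_nonneg_left (hDb i s x) (abs_nonneg _))
    rwa [integral_mul_const] at h
  -- representation of the nonlocal operators
  have hlopφ : ∀ k x, LopLp R₀ φ (u k) x = LΦ k x := by
    intro k x
    have h := LGAux.lop_change R₀ Φ hΦsupp hΦi (u k) (hu k) C (hC k) x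
    show (∫ y, (Set.Icc 0 R₀).indicator (φ : ℝ → ℝ) |y - x| * (u k y - u k x)) = LΦ k x
    rw [← hΦdef]
    simp only [hLΦ, hD]
    exact h
  have hlopψ : ∀ k x, LopLp R₀ ψ (u k) x = LΨ k x := by
    intro k x
    have h := LGAux.lop_change R₀ Ψ hΨsupp hΨi (u k) (hu k) C (hC k) x
    show (∫ y, (Set.Icc 0 R₀).indicator (ψ : ℝ → ℝ) |y - x| * (u k y - u k x)) = LΨ k x
    rw [← hΨdef]
    simp only [hLΨ, hD]
    exact h
  -- integrability in s and r
  have hois : ∀ (i : Fin N) r, Integrable (fun s => Φ s * ci i r s) volume := by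
    intro i r
    refine Integrable.mono' (g := fun s => |Φ s| * CK) (hΦi.abs.mul_const _)
      (hΦm.mul (hcimr i r)) ?_
    filter_upwards with s
    rw [Real.norm_eq_abs, abs_mul]
    by_cases hs : s ∈ Icc (0:ℝ) R₀
    · exact mul_le_mul_of_nonneg_left (hciM i r s (Or.inr hs)) (abs_nonneg _)
    · rw [hΦsupp s hs]; simp
  have hbint : ∀ (i : Fin N) a, |∫ s, Φ s * ci i a s| ≤ IΦ * CK := by
    intro i a
    have h := LGAux.int_abs_le (f := fun s => Φ s * ci i a s) (g := fun s => |Φ s| * CK)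
      (hΦi.abs.mul_const _) (fun s => by
        rw [abs_mul]
        by_cases hs : s ∈ Icc (0:ℝ) R₀
        · exact mul_le_mul_of_nonneg_left (hciM i a s (Or.inr hs)) (abs_nonneg _)
        · rw [hΦsupp s hs]; simp only [abs_zero, zero_mul]; positivity)
    rwa [integral_mul_const] at h
  have hoir : ∀ i : Fin N, Integrable (fun a => Ψ a * (∫ s, Φ s * ci i a s)) volume := by
    intro i
    have hmeas : AEStronglyMeasurable (fun a => ∫ s, Φ s * ci i a s) volume := by
      have : AEStronglyMeasurable (fun z : ℝ × ℝ => Φ z.2 * ci i z.1 z.2)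
          ((volume : Measure ℝ).prod volume) := hΦm.comp_snd.mul (hcimm i)
      exact this.integral_prod_right'
    refine Integrable.mono' (g := fun a => |Ψ a| * (IΦ * CK)) (hΨi.abs.mul_const _)
      (hΨm.mul hmeas) ?_
    filter_upwards with a
    rw [Real.norm_eq_abs, abs_mul]
    exact mul_le_mul_of_nonneg_left (hbint i a) (abs_nonneg _)
  -- the bilinear identity, one data function at a time
  have hRHS : ∀ k, (∫ x, LΦ k x * LΨ k x) = ∫ r, Ψ r * (∫ s, Φ s * ci k r s) := by
    intro k
    have step1 : (∫ x, LΦ k x * LΨ k x) = ∫ x, ∫ r, Ψ r * D k r x * LΦ k x := by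
      congr 1; funext x
      have h2 : LΨ k x * LΦ k x = ∫ r, Ψ r * D k r x * LΦ k x := by
        simp only [hLΨ]
        exact (integral_mul_const _ _).symm
      rw [mul_comm, h2]
    have hswap1 : (∫ x, ∫ r, Ψ r * D k r x * LΦ k x) =
        ∫ r, ∫ x, Ψ r * D k r x * LΦ k x := by
      apply LGAux.swap_aux (g₁ := K.indicator (fun _ => IΦ * (4 * C)))
        (g₂ := fun r => |Ψ r| * (4 * C))
      · exact (hΨm.comp_snd.mul ((hDc k).comp continuous_swap).aestronglyMeasurable).mul
          ((hLΦm k).comp_fst)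
      · exact hKind _
      · exact hΨi.abs.mul_const _
      · intro x r
        by_cases hx : x ∈ K
        · rw [indicator_of_mem hx]
          calc |Ψ r * D k r x * LΦ k x| = |Ψ r * D k r x| * |LΦ k x| := abs_mul _ _
            _ ≤ (|Ψ r| * (4 * C)) * (IΦ * (4 * C)) := by
                refine mul_le_mul ?_ ?_ (abs_nonneg _) (by positivity)
                · rw [abs_mul]
                  exact mul_le_mul_of_nonneg_left (hDb k r x) (abs_nonneg _)
                · simpa [hLΦ, hIΦdef] using hLb Φ hΦi k x
            _ = IΦ * (4 * C) * (|Ψ r| * (4 * C)) := by ring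
        · rw [indicator_of_notMem hx]
          have h0 : LΦ k x = 0 := hL0 Φ hΦsupp k x hx
          rw [h0, mul_zero, abs_zero, zero_mul]
    have hswap2 : ∀ r, (∫ x, Ψ r * D k r x * LΦ k x) = ∫ s, Φ s * (Ψ r * ci k r s) := by
      intro r
      have e1 : (∫ x, Ψ r * D k r x * LΦ k x) =
          ∫ x, ∫ s, Φ s * D k s x * (Ψ r * D k r x) := by
        congr 1; funext x
        have h3 : Ψ r * D k r x * LΦ k x = LΦ k x * (Ψ r * D k r x) := by ring
        rw [h3]
        simp only [hLΦ]
        exact (integral_mul_const _ _).symm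
      rw [e1]
      have e2 : (∫ x, ∫ s, Φ s * D k s x * (Ψ r * D k r x)) =
          ∫ s, ∫ x, Φ s * D k s x * (Ψ r * D k r x) := by
        apply LGAux.swap_aux (g₁ := K.indicator (fun _ => 4 * C * (|Ψ r| * (4 * C))))
          (g₂ := fun s => |Φ s|)
        · exact ((hΦm.comp_snd.mul
            (((hDc k).comp continuous_swap).aestronglyMeasurable)).mul
            ((continuous_const.mul ((hDc k).comp
              (continuous_const.prodMk continuous_fst))).aestronglyMeasurable))
        · exact hKind _
        · exact hΦi.abs
        · intro x s
          by_cases hx : x ∈ K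
          · rw [indicator_of_mem hx]
            calc |Φ s * D k s x * (Ψ r * D k r x)|
                = |Φ s| * |D k s x| * (|Ψ r| * |D k r x|) := by
                  rw [abs_mul, abs_mul, abs_mul]
              _ ≤ |Φ s| * (4 * C) * (|Ψ r| * (4 * C)) := by
                  refine mul_le_mul ?_ ?_ (by positivity) (by positivity)
                  · exact mul_le_mul_of_nonneg_left (hDb k s x) (abs_nonneg _)
                  · exact mul_le_mul_of_nonneg_left (hDb k r x) (abs_nonneg _)
              _ = 4 * C * (|Ψ r| * (4 * C)) * |Φ s| := by ring
          · rw [indicator_of_notMem hx, zero_mul]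
            by_cases hs : s ∈ Icc (0:ℝ) R₀
            · rw [hD0 k s x hs hx]; simp
            · rw [hΦsupp s hs]; simp
      rw [e2]
      congr 1; funext s
      calc (∫ x, Φ s * D k s x * (Ψ r * D k r x))
          = ∫ x, (Φ s * Ψ r) * (D k r x * D k s x) := by congr 1; funext x; ring
        _ = (Φ s * Ψ r) * ci k r s := by rw [integral_const_mul]
        _ = Φ s * (Ψ r * ci k r s) := by ring
    rw [step1, hswap1]
    congr 1; funext r
    rw [hswap2 r]
    calc (∫ s, Φ s * (Ψ r * ci k r s)) = ∫ s, Ψ r * (Φ s * ci k r s) := by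
          congr 1; funext s; ring
      _ = Ψ r * ∫ s, Φ s * ci k r s := integral_const_mul _ _
  -- the Gker expansion
  have hGexp : ∀ a, (∫ s, Φ s * Gker N u a s) = (N:ℝ)⁻¹ * ∑ i, ∫ s, Φ s * ci i a s := by
    intro a
    have h1 : (fun s => Φ s * Gker N u a s) =
        fun s => (N:ℝ)⁻¹ * ∑ i, Φ s * ci i a s := by
      funext s
      have hg : Gker N u a s = (N:ℝ)⁻¹ * ∑ i, ci i a s := by
        simp only [Gker, hci, hD]
      rw [hg, mul_left_comm, Finset.mul_sum]
    rw [h1, integral_const_mul, integral_finset_sum _ (fun i _ => hois i a)]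
  -- the inner integral over ρ
  have hinner2 : ∀ a ∈ Icc (0:ℝ) R₀,
      (∫ s, (φ : ℝ → ℝ) s * Gbar N u p a s ∂ρ) =
        (∫ s, Φ s * Gker N u a s) * (p a)⁻¹ := by
    intro a ha
    rw [hconv]
    have e : EqOn (fun s => (pn s : ℝ) * ((φ : ℝ → ℝ) s * Gbar N u p a s))
        (fun s => ((φ : ℝ → ℝ) s * Gker N u a s) * (p a)⁻¹) (Icc (0:ℝ) R₀) := by
      intro s hs
      have hps : p s ≠ 0 := (hpp s hs).ne'
      have hpa : p a ≠ 0 := (hpp a ha).ne'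
      have hcoe : (pn s : ℝ) = p s := by simp [hpn, Real.coe_toNNReal _ (hpp s hs).le]
      simp only [hcoe, Gbar]
      field_simp
    rw [setIntegral_congr_fun hIcc e, integral_mul_const, ← integral_indicator hIcc]
    congr 1
    congr 1
    funext s
    rw [Set.indicator_mul_left]
  -- final assembly
  rw [L2.inner_def]
  have hinner_eq : ∀ᵐ a ∂ρ, (⟪(Tφ : ℝ → ℝ) a, (ψ : ℝ → ℝ) a⟫ : ℝ) =
      (∫ s, (φ : ℝ → ℝ) s * Gbar N u p a s ∂ρ) * (ψ : ℝ → ℝ) a := by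
    filter_upwards [hTφ] with a ha
    rw [RCLike.inner_apply, conj_trivial, ha]
    ring
  rw [integral_congr_ae hinner_eq, hconv _]
  have hmid : (∫ a in Icc (0:ℝ) R₀,
      ((pn a : ℝ) * ((∫ s, (φ : ℝ → ℝ) s * Gbar N u p a s ∂ρ) * (ψ : ℝ → ℝ) a)))
      = ∫ a, Ψ a * ((N:ℝ)⁻¹ * ∑ i, ∫ s, Φ s * ci i a s) := by
    rw [← integral_indicator hIcc]
    congr 1; funext a
    by_cases ha : a ∈ Icc (0:ℝ) R₀
    · rw [indicator_of_mem ha, hinner2 a ha, hGexp a]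
      have hpa : p a ≠ 0 := (hpp a ha).ne'
      have hcoe : (pn a : ℝ) = p a := by simp [hpn, Real.coe_toNNReal _ (hpp a ha).le]
      have hΨa : Ψ a = (ψ : ℝ → ℝ) a := indicator_of_mem ha _
      rw [hcoe, hΨa]
      field_simp
    · rw [indicator_of_notMem ha, hΨsupp a ha, zero_mul]
  rw [hmid]
  have hfinal : (∫ a, Ψ a * ((N:ℝ)⁻¹ * ∑ i, ∫ s, Φ s * ci i a s))
      = (N:ℝ)⁻¹ * ∑ i, ∫ a, Ψ a * (∫ s, Φ s * ci i a s) := by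
    have h1 : (fun a => Ψ a * ((N:ℝ)⁻¹ * ∑ i, ∫ s, Φ s * ci i a s)) =
        fun a => (N:ℝ)⁻¹ * ∑ i, Ψ a * (∫ s, Φ s * ci i a s) := by
      funext a; rw [mul_left_comm, Finset.mul_sum]
    rw [h1, integral_const_mul, integral_finset_sum _ (fun i _ => hoir i)]
  rw [hfinal]
  congr 1
  apply Finset.sum_congr rfl
  intro k _
  rw [← hRHS k]
  congr 1; funext x
  rw [hlopφ, hlopψ]
end
end

section
/- For φ ∈ L²(ρ), the following are equivalent: (i) L_Ḡ φ = 0 in L²(ρ); (ii) L_φ[u_i](x) = 0 for almost every x ∈ ℝ, for every i = 1,…,N. -/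
open MeasureTheory Set
open scoped BigOperators RealInnerProductSpace ENNReal

noncomputable section

/-- Auxiliary: `φ` extended by zero. -/
def psiF (R₀ : ℝ) (f : ℝ → ℝ) : ℝ → ℝ := (Set.Icc 0 R₀).indicator f

/-- Auxiliary second difference. -/
def DF (u : ℝ → ℝ) (t x : ℝ) : ℝ := u (x + t) + u (x - t) - 2 * u x

/-- Auxiliary: the function `F(x) = ∫ ψ(s) D_s u (x) ds`. -/
def FF (R₀ : ℝ) (f : ℝ → ℝ) (u : ℝ → ℝ) (x : ℝ) : ℝ := ∫ s, psiF R₀ f s * DF u s x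

lemma absQMP : Measure.QuasiMeasurePreserving (fun t : ℝ => |t|) volume volume := by
  refine ⟨continuous_abs.measurable, Measure.AbsolutelyContinuous.mk fun s hs h0 => ?_⟩
  rw [Measure.map_apply continuous_abs.measurable hs]
  have hsub : (fun t : ℝ => |t|) ⁻¹' s ⊆ s ∪ (-s) := by
    intro t ht
    rcases le_or_gt 0 t with h | h
    · left; simpa [abs_of_nonneg h] using ht
    · right; simp only [Set.mem_neg]; simpa [abs_of_neg h] using ht
  refine measure_mono_null hsub (measure_union_null h0 ?_)
  rwa [Measure.measure_neg]

lemma DF_cont {u : ℝ → ℝ} (hu : Continuous u) :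
    Continuous (fun q : ℝ × ℝ => DF u q.1 q.2) := by
  unfold DF; fun_prop

lemma DF_bound {u : ℝ → ℝ} {C : ℝ} (hC : ∀ y, |u y| ≤ C) (t x : ℝ) :
    |DF u t x| ≤ 4 * C := by
  have h1 := hC (x + t); have h2 := hC (x - t); have h3 := hC x
  unfold DF
  have := abs_add_le (u (x + t)) (u (x - t))
  have h4 : |u (x + t) + u (x - t) - 2 * u x| ≤ |u (x + t) + u (x - t)| + |2 * u x| := by
    simpa [sub_eq_add_neg, abs_neg] using abs_add_le (u (x + t) + u (x - t)) (-(2 * u x))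
  have h5 : |2 * u x| = 2 * |u x| := by rw [abs_mul]; norm_num
  linarith [abs_nonneg (u x)]

lemma DF_supp {u : ℝ → ℝ} {M R₀ : ℝ} (hM : ∀ y, M < |y| → u y = 0) {t x : ℝ}
    (ht : t ∈ Set.Icc 0 R₀) (hx : M + R₀ < |x|) : DF u t x = 0 := by
  have ht' : |t| ≤ R₀ := by rw [abs_of_nonneg ht.1]; exact ht.2
  have h1 : u (x + t) = 0 := by
    refine hM _ ?_
    have : |x| ≤ |x + t| + |t| := by
      simpa using abs_add_le (x + t) (-t)
    linarith
  have h2 : u (x - t) = 0 := by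
    refine hM _ ?_
    have : |x| ≤ |x - t| + |t| := by
      simpa [sub_eq_add_neg] using abs_add_le (x - t) t
    linarith
  have h3 : u x = 0 := hM _ (by have := ht.1.trans ht.2; linarith)
  simp [DF, h1, h2, h3]


/-- `L_Ḡ φ = 0` in `L²(ρ)` iff `L_φ[u_i] = 0` a.e. for every `i`. -/
theorem LG_eq_zero_iff (R₀ : ℝ) (hR₀ : 0 < R₀)
    (N : ℕ) (hN : 0 < N) (u : Fin N → ℝ → ℝ)
    (hu : ∀ i, Continuous (u i)) (hcs : ∀ i, HasCompactSupport (u i))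
    (p : ℝ → ℝ) (hpc : ContinuousOn p (Set.Icc 0 R₀)) (hpp : ∀ r ∈ Set.Icc 0 R₀, 0 < p r)
    (ρ : Measure ℝ) [IsProbabilityMeasure ρ]
    (hρ : ρ = (volume.restrict (Set.Icc 0 R₀)).withDensity fun r => ENNReal.ofReal (p r))
    (φ : Lp ℝ 2 ρ) :
    ((fun r => ∫ s, (φ : ℝ → ℝ) s * Gbar N u p r s ∂ρ) =ᵐ[ρ] 0)
      ↔ ∀ i, (fun x => LopLp R₀ φ (u i) x) =ᵐ[volume] 0 := by
  classical
  have hIcc : MeasurableSet (Set.Icc (0:ℝ) R₀) := measurableSet_Icc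
  -- global bound C on all |u i|
  have hCex : ∀ i : Fin N, ∃ Ci : ℝ, ∀ y, |u i y| ≤ Ci := by
    intro i
    obtain ⟨Ci, hCi⟩ := ((hu i).norm.bddAbove_range_of_hasCompactSupport (hcs i).norm)
    exact ⟨Ci, fun y => hCi ⟨y, rfl⟩⟩
  choose Cs hCs using hCex
  set C : ℝ := ∑ i, |Cs i| with hCdef
  have hC : ∀ i y, |u i y| ≤ C := by
    intro i y
    refine (hCs i y).trans ((le_abs_self _).trans ?_)
    exact Finset.single_le_sum (f := fun j => |Cs j|) (fun j _ => abs_nonneg _)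
      (Finset.mem_univ i)
  have hC0 : 0 ≤ C := (abs_nonneg _).trans (hC ⟨0, hN⟩ 0)
  -- global support radius M
  have hMex : ∀ i : Fin N, ∃ Mi : ℝ, ∀ y, Mi < |y| → u i y = 0 := by
    intro i
    obtain ⟨Mi, hMi⟩ := (hcs i).isBounded.subset_closedBall 0
    refine ⟨Mi, fun y hy => image_eq_zero_of_notMem_tsupport fun hmem => ?_⟩
    have := hMi hmem
    rw [Metric.mem_closedBall, dist_zero_right, Real.norm_eq_abs] at this
    linarith
  choose Ms hMs using hMex
  set M : ℝ := ∑ i, |Ms i| with hMdef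
  have hM : ∀ i y, M < |y| → u i y = 0 := by
    intro i y hy
    refine hMs i y (lt_of_le_of_lt ?_ hy)
    refine (le_abs_self _).trans ?_
    exact Finset.single_le_sum (f := fun j => |Ms j|) (fun j _ => abs_nonneg _)
      (Finset.mem_univ i)
  -- measure facts
  have hρ_ac : ρ ≪ volume.restrict (Set.Icc 0 R₀) := by
    rw [hρ]; exact withDensity_absolutelyContinuous _ _
  have haeIcc : ∀ᵐ r ∂ρ, r ∈ Set.Icc 0 R₀ :=
    hρ_ac.ae_le (ae_restrict_mem hIcc)
  have hpm : AEMeasurable p (volume.restrict (Set.Icc 0 R₀)) := hpc.aemeasurable hIcc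
  -- integral over ρ as weighted integral
  have intρ : ∀ f : ℝ → ℝ, ∫ s, f s ∂ρ = ∫ s in Set.Icc 0 R₀, p s * f s := by
    intro f
    rw [hρ]
    have hpnn : AEMeasurable (fun r => (p r).toNNReal) (volume.restrict (Set.Icc 0 R₀)) :=
      measurable_real_toNNReal.comp_aemeasurable hpm
    rw [show (fun r => ENNReal.ofReal (p r))
        = (fun r => ((fun r => (p r).toNNReal) r : ℝ≥0∞)) from rfl]
    rw [integral_withDensity_eq_integral_smul₀ hpnn f]
    refine setIntegral_congr_fun hIcc fun s hs => ?_
    simp [NNReal.smul_def, Real.coe_toNNReal _ (hpp s hs).le]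
  -- lower bound on p
  obtain ⟨r₀, hr₀, hmin⟩ :=
    isCompact_Icc.exists_isMinOn (nonempty_Icc.mpr hR₀.le) hpc
  have hc : 0 < p r₀ := hpp r₀ hr₀
  -- ψ is integrable for Lebesgue measure
  have hφL1 : Integrable (φ : ℝ → ℝ) ρ := (Lp.memLp φ).integrable one_le_two
  have hsmle : (ENNReal.ofReal (p r₀)) • (volume.restrict (Set.Icc 0 R₀)) ≤ ρ := by
    rw [hρ, ← withDensity_const]
    refine withDensity_mono ?_
    filter_upwards [ae_restrict_mem hIcc] with r hr
    exact ENNReal.ofReal_le_ofReal (hmin hr)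
  have hφIcc : IntegrableOn (φ : ℝ → ℝ) (Set.Icc 0 R₀) volume := by
    have h1 : Integrable (φ : ℝ → ℝ)
        ((ENNReal.ofReal (p r₀)) • (volume.restrict (Set.Icc 0 R₀))) :=
      hφL1.mono_measure hsmle
    exact (integrable_smul_measure (by simp [hc]) (by simp)).mp h1
  have hψint : Integrable (psiF R₀ (φ : ℝ → ℝ)) volume := by
    rw [psiF, integrable_indicator_iff hIcc]; exact hφIcc
  have hψm : AEStronglyMeasurable (psiF R₀ (φ : ℝ → ℝ)) volume := hψint.aestronglyMeasurable
  have hψ0 : ∀ t, t ∉ Set.Icc 0 R₀ → psiF R₀ (φ : ℝ → ℝ) t = 0 := fun t ht =>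
    Set.indicator_of_notMem ht _
  -- integrability of s ↦ ψ s * D s x
  have hIψD : ∀ (i : Fin N) (x : ℝ), Integrable (fun s => psiF R₀ (φ : ℝ → ℝ) s * DF (u i) s x)
      volume := by
    intro i x
    refine Integrable.mono' (hψint.norm.mul_const (4 * C))
      (hψm.mul ((DF_cont (hu i)).comp (continuous_id.prodMk continuous_const)).aestronglyMeasurable)
      (ae_of_all _ fun s => ?_)
    rw [norm_mul]
    exact mul_le_mul_of_nonneg_left (by simpa using DF_bound (hC i) s x) (norm_nonneg _)
  -- product integrability
  have prodInt : ∀ (i : Fin N) (W : ℝ → ℝ), AEStronglyMeasurable W volume →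
      ∀ CW : ℝ, (∀ x, |W x| ≤ CW) →
      Integrable (Function.uncurry fun s x =>
        psiF R₀ (φ : ℝ → ℝ) s * (DF (u i) s x * W x)) (volume.prod volume) := by
    intro i W hWm CW hWb
    have hCW0 : 0 ≤ CW := (abs_nonneg _).trans (hWb 0)
    set B : ℝ → ℝ := (Set.Icc (-(M + R₀)) (M + R₀)).indicator (fun _ => 4 * C * CW) with hBdef
    have hBint : Integrable B volume := by
      rw [hBdef, integrable_indicator_iff measurableSet_Icc]
      exact integrableOn_const measure_Icc_lt_top.ne
    have hBnn : ∀ x, 0 ≤ B x := fun x => by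
      rw [hBdef]
      exact Set.indicator_nonneg (fun _ _ => by positivity) x
    refine Integrable.mono' (hψint.norm.mul_prod hBint) ?_ (ae_of_all _ fun q => ?_)
    · exact (hψm.comp_quasiMeasurePreserving Measure.quasiMeasurePreserving_fst).mul
        ((DF_cont (hu i)).aestronglyMeasurable.mul
          (hWm.comp_quasiMeasurePreserving Measure.quasiMeasurePreserving_snd))
    · obtain ⟨s, x⟩ := q
      simp only [Function.uncurry]
      rw [norm_mul]
      by_cases hs : s ∈ Set.Icc 0 R₀
      · refine mul_le_mul_of_nonneg_left ?_ (norm_nonneg _)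
        by_cases hx : M + R₀ < |x|
        · rw [DF_supp (hM i) hs hx]
          simpa using hBnn x
        · have hxmem : x ∈ Set.Icc (-(M + R₀)) (M + R₀) := by
            rw [Set.mem_Icc, ← abs_le]; linarith
          rw [hBdef, Set.indicator_of_mem hxmem]
          rw [norm_mul]
          have h1 : ‖DF (u i) s x‖ ≤ 4 * C := by simpa using DF_bound (hC i) s x
          have h2 : ‖W x‖ ≤ CW := by simpa using hWb x
          exact mul_le_mul h1 h2 (norm_nonneg _) (by positivity)
      · rw [hψ0 s hs]
        simp only [norm_zero, zero_mul]
        positivity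
  -- Fubini
  have swapEq : ∀ (i : Fin N) (W : ℝ → ℝ), AEStronglyMeasurable W volume →
      ∀ CW : ℝ, (∀ x, |W x| ≤ CW) →
      (∫ s, ∫ x, psiF R₀ (φ : ℝ → ℝ) s * (DF (u i) s x * W x))
        = ∫ x, FF R₀ (φ : ℝ → ℝ) (u i) x * W x := by
    intro i W hWm CW hWb
    rw [integral_integral_swap (prodInt i W hWm CW hWb)]
    refine integral_congr_ae (ae_of_all _ fun x => ?_)
    show (∫ s, psiF R₀ (φ : ℝ → ℝ) s * (DF (u i) s x * W x))
        = FF R₀ (φ : ℝ → ℝ) (u i) x * W x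
    have : (fun s => psiF R₀ (φ : ℝ → ℝ) s * (DF (u i) s x * W x))
        = fun s => (psiF R₀ (φ : ℝ → ℝ) s * DF (u i) s x) * W x := by
      funext s; ring
    rw [this, integral_mul_const]
    rfl
  -- F is integrable (hence a.e. measurable)
  have hFint : ∀ i : Fin N, Integrable (FF R₀ (φ : ℝ → ℝ) (u i)) volume := by
    intro i
    have h0 : Integrable (Function.uncurry fun s x =>
        psiF R₀ (φ : ℝ → ℝ) s * DF (u i) s x) (volume.prod volume) := by
      refine (prodInt i (fun _ => 1) aestronglyMeasurable_const 1 (by norm_num)).congr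
        (ae_of_all _ fun q => by simp [Function.uncurry])
    exact h0.integral_prod_right
  -- F is bounded
  obtain ⟨CF, hCF⟩ : ∃ CF : ℝ, ∀ (i : Fin N) (x : ℝ), |FF R₀ (φ : ℝ → ℝ) (u i) x| ≤ CF := by
    refine ⟨(4 * C) * ∫ t, ‖psiF R₀ (φ : ℝ → ℝ) t‖, fun i x => ?_⟩
    have h1 : |FF R₀ (φ : ℝ → ℝ) (u i) x|
        ≤ ∫ s, ‖psiF R₀ (φ : ℝ → ℝ) s * DF (u i) s x‖ := by
      simpa [FF] using norm_integral_le_integral_norm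
        (fun s => psiF R₀ (φ : ℝ → ℝ) s * DF (u i) s x)
    refine h1.trans ?_
    rw [← integral_const_mul]
    refine integral_mono (hIψD i x).norm (hψint.norm.const_mul _) fun s => ?_
    rw [norm_mul, mul_comm]
    exact mul_le_mul_of_nonneg_right (by simpa using DF_bound (hC i) s x) (norm_nonneg _)
  have hFm : ∀ i : Fin N, AEStronglyMeasurable (FF R₀ (φ : ℝ → ℝ) (u i)) volume :=
    fun i => (hFint i).aestronglyMeasurable
  -- integrability of the per-`i` marginal against a bounded weight
  have margInt : ∀ (i : Fin N) (W : ℝ → ℝ), AEStronglyMeasurable W volume →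
      ∀ CW : ℝ, (∀ x, |W x| ≤ CW) →
      Integrable (fun s => psiF R₀ (φ : ℝ → ℝ) s * ∫ x, W x * DF (u i) s x) volume := by
    intro i W hWm CW hWb
    refine ((prodInt i W hWm CW hWb).integral_prod_left).congr (ae_of_all _ fun s => ?_)
    show (∫ x, psiF R₀ (φ : ℝ → ℝ) s * (DF (u i) s x * W x))
      = psiF R₀ (φ : ℝ → ℝ) s * ∫ x, W x * DF (u i) s x
    rw [integral_const_mul]
    congr 1
    exact integral_congr_ae (ae_of_all _ fun x => by ring)
  -- the key pointwise formula for the left-hand side function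
  have keyL : ∀ r ∈ Set.Icc (0:ℝ) R₀,
      (∫ s, (φ : ℝ → ℝ) s * Gbar N u p r s ∂ρ)
        = (p r)⁻¹ * ((N : ℝ)⁻¹ * ∑ i, ∫ x, FF R₀ (φ : ℝ → ℝ) (u i) x * DF (u i) r x) := by
    intro r hr
    have hDrm : ∀ i : Fin N, AEStronglyMeasurable (fun x => DF (u i) r x) volume := fun i =>
      ((DF_cont (hu i)).comp (continuous_const.prodMk continuous_id)).aestronglyMeasurable
    have hDrb : ∀ (i : Fin N) (x : ℝ), |DF (u i) r x| ≤ 4 * C := fun i x => DF_bound (hC i) r x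
    have e1 : (∫ s, (φ : ℝ → ℝ) s * Gbar N u p r s ∂ρ)
        = (p r)⁻¹ * ∫ s, psiF R₀ (φ : ℝ → ℝ) s * Gker N u r s := by
      rw [intρ]
      have : ∀ s ∈ Set.Icc (0:ℝ) R₀,
          p s * ((φ : ℝ → ℝ) s * Gbar N u p r s)
            = (p r)⁻¹ * ((φ : ℝ → ℝ) s * Gker N u r s) := by
        intro s hs
        rw [Gbar]
        field_simp [(hpp s hs).ne', (hpp r hr).ne']
      rw [setIntegral_congr_fun hIcc this, integral_const_mul]
      congr 1
      rw [← integral_indicator hIcc]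
      refine integral_congr_ae (ae_of_all _ fun s => ?_)
      rw [psiF, Set.indicator_mul_left]
    rw [e1]
    congr 1
    have e2 : ∀ s, psiF R₀ (φ : ℝ → ℝ) s * Gker N u r s
        = (N : ℝ)⁻¹ * ∑ i, psiF R₀ (φ : ℝ → ℝ) s * ∫ x, DF (u i) r x * DF (u i) s x := by
      intro s
      have : Gker N u r s = (N : ℝ)⁻¹ * ∑ i, ∫ x, DF (u i) r x * DF (u i) s x := rfl
      rw [this]
      simp only [Finset.mul_sum]
      exact Finset.sum_congr rfl fun i _ => by ring
    simp only [e2]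
    rw [integral_const_mul, integral_finset_sum _ fun i _ => margInt i _ (hDrm i) _ (hDrb i)]
    congr 1
    refine Finset.sum_congr rfl fun i _ => ?_
    have e3 : (fun s => psiF R₀ (φ : ℝ → ℝ) s * ∫ x, DF (u i) r x * DF (u i) s x)
        = fun s => ∫ x, psiF R₀ (φ : ℝ → ℝ) s * (DF (u i) s x * DF (u i) r x) := by
      funext s
      rw [integral_const_mul]
      congr 1
      exact integral_congr_ae (ae_of_all _ fun x => by ring)
    rw [e3, swapEq i _ (hDrm i) _ (hDrb i)]
  -- LopLp coincides with F
  have hLF : ∀ (i : Fin N) (x : ℝ), LopLp R₀ φ (u i) x = FF R₀ (φ : ℝ → ℝ) (u i) x := by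
    intro i x
    set ψ : ℝ → ℝ := psiF R₀ (φ : ℝ → ℝ) with hψdef
    set g : ℝ → ℝ := fun t => ψ |t| * (u i (x + t) - u i x) with hgdef
    have hgm : AEStronglyMeasurable g volume := by
      refine (hψm.comp_quasiMeasurePreserving absQMP).mul ?_
      exact (((hu i).comp (continuous_const.add continuous_id)).sub
        continuous_const).aestronglyMeasurable
    have hgd : Integrable (fun t => (‖ψ t‖ + ‖ψ (-t)‖) * (2 * C)) volume := by
      refine Integrable.mul_const ?_ _
      exact hψint.norm.add (hψint.norm.comp_neg)
    have hgint : Integrable g volume := by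
      refine Integrable.mono' hgd hgm (ae_of_all _ fun t => ?_)
      rw [hgdef]
      simp only [norm_mul]
      have h1 : ‖ψ |t|‖ ≤ ‖ψ t‖ + ‖ψ (-t)‖ := by
        rcases le_or_gt 0 t with h | h
        · rw [abs_of_nonneg h]; exact le_add_of_nonneg_right (norm_nonneg _)
        · rw [abs_of_neg h]; exact le_add_of_nonneg_left (norm_nonneg _)
      have h2 : ‖u i (x + t) - u i x‖ ≤ 2 * C := by
        have := hC i (x + t); have := hC i x
        rw [Real.norm_eq_abs]
        calc |u i (x + t) - u i x| ≤ |u i (x + t)| + |u i x| := abs_sub _ _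
        _ ≤ 2 * C := by linarith
      exact mul_le_mul h1 h2 (norm_nonneg _) (by positivity)
    have step1 : LopLp R₀ φ (u i) x = ∫ t, g t := by
      rw [LopLp]
      show (∫ y, ψ |y - x| * (u i y - u i x)) = ∫ t, g t
      rw [← integral_add_right_eq_self (fun y => ψ |y - x| * (u i y - u i x)) x]
      refine integral_congr_ae (ae_of_all _ fun t => ?_)
      simp only [add_sub_cancel_right, hgdef]
      rw [add_comm t x]
    have step2 : ∫ t, g t = (∫ t in Set.Ioi (0:ℝ), g t) + ∫ t in Set.Iic (0:ℝ), g t := by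
      rw [← compl_Ioi]
      exact (integral_add_compl measurableSet_Ioi hgint).symm
    have step3 : ∫ t in Set.Iic (0:ℝ), g t = ∫ t in Set.Ioi (0:ℝ), g (-t) := by
      have := integral_comp_neg_Ioi (0:ℝ) g
      rw [neg_zero] at this
      exact this.symm
    have step4 : (∫ t in Set.Ioi (0:ℝ), g t) + (∫ t in Set.Ioi (0:ℝ), g (-t))
        = ∫ t in Set.Ioi (0:ℝ), ψ t * DF (u i) t x := by
      rw [← integral_add hgint.integrableOn hgint.comp_neg.integrableOn]
      refine setIntegral_congr_fun measurableSet_Ioi fun t ht => ?_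
      have ht' : (0:ℝ) < t := ht
      simp only [hgdef, abs_neg, abs_of_pos ht', DF]
      have : x + -t = x - t := by ring
      rw [this]; ring
    have step5 : ∫ t in Set.Ioi (0:ℝ), ψ t * DF (u i) t x = FF R₀ (φ : ℝ → ℝ) (u i) x := by
      rw [FF, ← hψdef]
      refine setIntegral_eq_integral_of_forall_compl_eq_zero fun t ht => ?_
      simp only [Set.mem_Ioi, not_lt] at ht
      rcases lt_or_eq_of_le ht with h | h
      · rw [hψdef, psiF, Set.indicator_of_notMem (fun hmem => absurd hmem.1 (not_le.mpr h))]
        ring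
      · have hD0 : DF (u i) t x = 0 := by
          rw [h]
          show u i (x + 0) + u i (x - 0) - 2 * u i x = 0
          rw [add_zero, sub_zero]; ring
        rw [hD0, mul_zero]
    rw [step1, step2, step3, step4, step5]
  constructor
  · intro h i
    have hT0 : (∫ r, (φ : ℝ → ℝ) r * (∫ s, (φ : ℝ → ℝ) s * Gbar N u p r s ∂ρ) ∂ρ) = 0 := by
      have h' : (fun r => (φ : ℝ → ℝ) r * (∫ s, (φ : ℝ → ℝ) s * Gbar N u p r s ∂ρ))
          =ᵐ[ρ] 0 := by
        filter_upwards [h] with r hr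
        simp only [Pi.zero_apply] at hr ⊢
        rw [hr, mul_zero]
      rw [integral_congr_ae h']; simp
    have hT : (∫ r, (φ : ℝ → ℝ) r * (∫ s, (φ : ℝ → ℝ) s * Gbar N u p r s ∂ρ) ∂ρ)
        = (N : ℝ)⁻¹ * ∑ j, ∫ x,
            FF R₀ (φ : ℝ → ℝ) (u j) x * FF R₀ (φ : ℝ → ℝ) (u j) x := by
      rw [intρ]
      have e1 : ∀ r ∈ Set.Icc (0:ℝ) R₀,
          p r * ((φ : ℝ → ℝ) r * (∫ s, (φ : ℝ → ℝ) s * Gbar N u p r s ∂ρ))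
            = (φ : ℝ → ℝ) r * ((N : ℝ)⁻¹ *
                ∑ j, ∫ x, FF R₀ (φ : ℝ → ℝ) (u j) x * DF (u j) r x) := by
        intro r hr
        rw [keyL r hr]
        field_simp [(hpp r hr).ne']
      rw [setIntegral_congr_fun hIcc e1, ← integral_indicator hIcc]
      have e2 : ∀ r, (Set.Icc (0:ℝ) R₀).indicator
          (fun r => (φ : ℝ → ℝ) r * ((N : ℝ)⁻¹ *
            ∑ j, ∫ x, FF R₀ (φ : ℝ → ℝ) (u j) x * DF (u j) r x)) r
          = (N : ℝ)⁻¹ * ∑ j, psiF R₀ (φ : ℝ → ℝ) r *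
              ∫ x, FF R₀ (φ : ℝ → ℝ) (u j) x * DF (u j) r x := by
        intro r
        rw [Set.indicator_mul_left]
        show psiF R₀ (φ : ℝ → ℝ) r * _ = _
        simp only [Finset.mul_sum]
        exact Finset.sum_congr rfl fun j _ => by ring
      rw [show (∫ r, (Set.Icc (0:ℝ) R₀).indicator
          (fun r => (φ : ℝ → ℝ) r * ((N : ℝ)⁻¹ *
            ∑ j, ∫ x, FF R₀ (φ : ℝ → ℝ) (u j) x * DF (u j) r x)) r)
          = ∫ r, (N : ℝ)⁻¹ * ∑ j, psiF R₀ (φ : ℝ → ℝ) r *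
              ∫ x, FF R₀ (φ : ℝ → ℝ) (u j) x * DF (u j) r x from
        integral_congr_ae (ae_of_all _ e2)]
      rw [integral_const_mul, integral_finset_sum _ fun j _ =>
        margInt j _ (hFm j) CF (hCF j)]
      congr 1
      refine Finset.sum_congr rfl fun j _ => ?_
      have e3 : (fun r => psiF R₀ (φ : ℝ → ℝ) r *
            ∫ x, FF R₀ (φ : ℝ → ℝ) (u j) x * DF (u j) r x)
          = fun r => ∫ x, psiF R₀ (φ : ℝ → ℝ) r *
              (DF (u j) r x * FF R₀ (φ : ℝ → ℝ) (u j) x) := by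
        funext r
        rw [integral_const_mul]
        congr 1
        exact integral_congr_ae (ae_of_all _ fun x => by ring)
      rw [e3, swapEq j _ (hFm j) CF (hCF j)]
    have hNne : ((N : ℝ))⁻¹ ≠ 0 := by
      simp [Nat.cast_ne_zero, hN.ne']
    have hsum0 : (∑ j, ∫ x,
        FF R₀ (φ : ℝ → ℝ) (u j) x * FF R₀ (φ : ℝ → ℝ) (u j) x) = 0 := by
      have := hT0
      rw [hT] at this
      rcases mul_eq_zero.mp this with h' | h'
      · exact absurd h' hNne
      · exact h'
    have hnn : ∀ j : Fin N, 0 ≤ ∫ x,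
        FF R₀ (φ : ℝ → ℝ) (u j) x * FF R₀ (φ : ℝ → ℝ) (u j) x :=
      fun j => integral_nonneg fun x => mul_self_nonneg _
    have hzero : (∫ x, FF R₀ (φ : ℝ → ℝ) (u i) x * FF R₀ (φ : ℝ → ℝ) (u i) x) = 0 :=
      (Finset.sum_eq_zero_iff_of_nonneg fun j _ => hnn j).mp hsum0 i (Finset.mem_univ i)
    have hF2int : Integrable (fun x =>
        FF R₀ (φ : ℝ → ℝ) (u i) x * FF R₀ (φ : ℝ → ℝ) (u i) x) volume := by
      refine Integrable.mono' ((hFint i).norm.const_mul CF)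
        ((hFm i).mul (hFm i)) (ae_of_all _ fun x => ?_)
      rw [norm_mul]
      exact mul_le_mul_of_nonneg_right (by simpa using hCF i x) (norm_nonneg _)
    have hF20 : (fun x => FF R₀ (φ : ℝ → ℝ) (u i) x * FF R₀ (φ : ℝ → ℝ) (u i) x)
        =ᵐ[volume] 0 :=
      (integral_eq_zero_iff_of_nonneg (fun x => mul_self_nonneg _) hF2int).mp hzero
    filter_upwards [hF20] with x hx
    simp only [Pi.zero_apply] at hx ⊢
    rw [hLF i x]
    exact mul_self_eq_zero.mp hx
  · intro h
    filter_upwards [haeIcc] with r hr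
    simp only [Pi.zero_apply]
    rw [keyL r hr]
    have hzero : ∀ i : Fin N,
        (∫ x, FF R₀ (φ : ℝ → ℝ) (u i) x * DF (u i) r x) = 0 := by
      intro i
      have hF0 : (FF R₀ (φ : ℝ → ℝ) (u i)) =ᵐ[volume] 0 := by
        filter_upwards [h i] with x hx
        simp only [Pi.zero_apply] at hx ⊢
        rw [← hLF i x]
        exact hx
      have : (fun x => FF R₀ (φ : ℝ → ℝ) (u i) x * DF (u i) r x) =ᵐ[volume] 0 := by
        filter_upwards [hF0] with x hx
        simp only [Pi.zero_apply] at hx ⊢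
        rw [hx, zero_mul]
      rw [integral_congr_ae this]; simp
    simp [hzero]
end
end

section
/- Let {ψ_k}_{k∈ℕ} be an orthonormal basis of L²(ρ) consisting of eigenfunctions of L_Ḡ with corresponding eigenvalues λ_k ≥ 0. Then for every φ ∈ L²(ρ), writing c_k = ⟨φ, ψ_k⟩_{L²(ρ)}, one has (1/N) Σ_{i=1}^N ‖L_φ[u_i]‖²_{L²(ℝ)} = Σ_{k∈ℕ} λ_k c_k². -/
open MeasureTheory Set
open scoped BigOperators RealInnerProductSpace ENNReal

noncomputable section

set_option linter.unusedVariables false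

lemma Lop_rep  (R₀ : ℝ) (hR₀ : 0 < R₀) (v : ℝ → ℝ) (hv : Continuous v) (hcs : HasCompactSupport v)
    (φt : ℝ → ℝ) (hφm : StronglyMeasurable φt) (hφint : Integrable φt)
    (hsupp : ∀ r, r ∉ Set.Icc 0 R₀ → φt r = 0) (x : ℝ) :
    ∫ y, φt |y - x| * (v y - v x) = ∫ r in Set.Icc 0 R₀,
      φt r * (v (x + r) + v (x - r) - 2 * v x) := by
  obtain ⟨C, hC⟩ := hcs.exists_bound_of_continuous hv
  set g : ℝ → ℝ := fun t => φt |t| * (v (x + t) - v x) with hg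
  have key : ∫ y, φt |y - x| * (v y - v x) = ∫ t, g t := by
    rw [← integral_add_left_eq_self (fun y => φt |y - x| * (v y - v x)) x]
    congr 1; ext t; simp [g]
  have hmul : ∀ (ψ : ℝ → ℝ), Integrable ψ → ∀ (w : ℝ → ℝ), Continuous w →
      Integrable (fun t => ψ t * (v (w t) - v x)) := by
    intro ψ hψ w hw
    have := hψ.bdd_mul ((hv.comp hw).sub continuous_const).aestronglyMeasurable
      (Filter.Eventually.of_forall fun t => by
        have h1 := hC (w t); have h2 := hC x
        calc ‖v (w t) - v x‖ ≤ ‖v (w t)‖ + ‖v x‖ := norm_sub_le _ _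
          _ ≤ 2 * C := by linarith)
    simpa [mul_comm] using this
  have hIci : IntegrableOn g (Set.Ici 0) := by
    refine ((hmul φt hφint (fun t => x + t) (by continuity)).integrableOn).congr_fun
      (fun t ht => ?_) measurableSet_Ici
    simp [g, abs_of_nonneg (mem_Ici.1 ht)]
  have hIio : IntegrableOn g (Set.Iio 0) := by
    refine ((hmul (fun t => φt (-t)) hφint.comp_neg (fun t => x + t)
      (by continuity)).integrableOn).congr_fun (fun t ht => ?_) measurableSet_Iio
    simp [g, abs_of_neg (mem_Iio.1 ht)]
  have hIoi : IntegrableOn g (Set.Ioi 0) := hIci.mono_set Ioi_subset_Ici_self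
  have hIoi' : IntegrableOn (fun t => g (-t)) (Set.Ioi 0) := by
    refine ((hmul φt hφint (fun t => x - t) (by continuity)).integrableOn).congr_fun
      (fun t ht => ?_) measurableSet_Ioi
    have : |(-t)| = t := by rw [abs_neg, abs_of_pos (mem_Ioi.1 ht)]
    simp only [g, this, sub_eq_add_neg]
  have split : ∫ t, g t = (∫ t in Set.Iio 0, g t) + ∫ t in Set.Ici 0, g t :=
    (intervalIntegral.integral_Iio_add_Ici hIio hIci).symm
  have hneg : ∫ t in Set.Iio 0, g t = ∫ t in Set.Ioi 0, g (-t) := by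
    rw [integral_comp_neg_Ioi, neg_zero, integral_Iic_eq_integral_Iio]
  have hIcieq : ∫ t in Set.Ici 0, g t = ∫ t in Set.Ioi 0, g t :=
    integral_Ici_eq_integral_Ioi
  have hadd : (∫ t in Set.Ioi 0, g (-t)) + ∫ t in Set.Ioi 0, g t
      = ∫ t in Set.Ioi 0, (g (-t) + g t) := (integral_add hIoi' hIoi).symm
  have hcomb : ∫ t in Set.Ioi 0, (g (-t) + g t)
      = ∫ t in Set.Ioi 0, φt t * (v (x + t) + v (x - t) - 2 * v x) := by
    refine setIntegral_congr_fun measurableSet_Ioi fun t ht => ?_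
    have h1 : |(-t)| = t := by rw [abs_neg, abs_of_pos (mem_Ioi.1 ht)]
    have h2 : |t| = t := abs_of_pos (mem_Ioi.1 ht)
    simp only [g, h1, h2, sub_eq_add_neg]
    ring
  have hfin : ∫ t in Set.Ioi 0, φt t * (v (x + t) + v (x - t) - 2 * v x)
      = ∫ t in Set.Icc 0 R₀, φt t * (v (x + t) + v (x - t) - 2 * v x) := by
    rw [setIntegral_eq_of_subset_of_ae_diff_eq_zero measurableSet_Ioi.nullMeasurableSet
      (Set.Ioc_subset_Ioi_self : Set.Ioc (0:ℝ) R₀ ⊆ Set.Ioi 0) (Filter.Eventually.of_forall fun t ht => ?_),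
      ← integral_Icc_eq_integral_Ioc]
    have htn : t ∉ Set.Icc 0 R₀ := by
      rintro ⟨h0, hr⟩
      exact ht.2 ⟨ht.1, hr⟩
    rw [hsupp t htn, zero_mul]
  rw [key, split, hneg, hIcieq, hadd, hcomb, hfin]

set_option maxHeartbeats 1000000 in
lemma fubini_core (R₀ : ℝ) (hR₀ : 0 < R₀) (v : ℝ → ℝ) (hv : Continuous v)
    (hcs : HasCompactSupport v)
    (φt : ℝ → ℝ) (hφm : StronglyMeasurable φt) (hφint : Integrable φt)
    (hsupp : ∀ r, r ∉ Set.Icc 0 R₀ → φt r = 0) :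
    (∫ x, (∫ r in Set.Icc 0 R₀, φt r * (v (x + r) + v (x - r) - 2 * v x))^2
      = ∫ z, φt z.1 * φt z.2 *
        (∫ x, (v (x + z.1) + v (x - z.1) - 2 * v x) * (v (x + z.2) + v (x - z.2) - 2 * v x))
        ∂((volume.restrict (Set.Icc 0 R₀)).prod (volume.restrict (Set.Icc 0 R₀))))
    ∧ Integrable (fun z : ℝ × ℝ => φt z.1 * φt z.2 *
        (∫ x, (v (x + z.1) + v (x - z.1) - 2 * v x) * (v (x + z.2) + v (x - z.2) - 2 * v x)))
        ((volume.restrict (Set.Icc 0 R₀)).prod (volume.restrict (Set.Icc 0 R₀))) := by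
  set ν : Measure ℝ := volume.restrict (Set.Icc 0 R₀) with hν
  obtain ⟨C, hC⟩ := hcs.exists_bound_of_continuous hv
  have hC0 : 0 ≤ C := le_trans (norm_nonneg _) (hC 0)
  obtain ⟨A, hA⟩ := hcs.isBounded.subset_closedBall 0
  set D : ℝ → ℝ → ℝ := fun r x => v (x + r) + v (x - r) - 2 * v x with hD
  set K : Set ℝ := Metric.closedBall (0:ℝ) (A + R₀) with hK
  have hKm : MeasurableSet K := measurableSet_closedBall
  have hKfin : volume K < ⊤ := (Metric.isBounded_closedBall).measure_lt_top
  have hDbd : ∀ r x, |D r x| ≤ 4 * C := by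
    intro r x
    have h1 := hC (x + r); have h2 := hC (x - r); have h3 := hC x
    simp only [Real.norm_eq_abs] at h1 h2 h3
    rw [abs_le] at h1 h2 h3
    show |v (x + r) + v (x - r) - 2 * v x| ≤ 4 * C
    rw [abs_le]
    constructor <;> [linarith; linarith]
  have hDzero : ∀ r ∈ Set.Icc 0 R₀, ∀ x, x ∉ K → D r x = 0 := by
    intro r hr x hx
    have hxa : A + R₀ < |x| := by
      by_contra h
      exact hx (by rw [hK, Metric.mem_closedBall, Real.dist_eq, sub_zero]; exact not_lt.1 h)
    have hz : ∀ y : ℝ, A < |y| → v y = 0 := by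
      intro y hy
      by_contra h
      have : y ∈ Metric.closedBall (0:ℝ) A := hA (subset_tsupport v (by simpa using h))
      rw [Metric.mem_closedBall, Real.dist_eq, sub_zero] at this
      exact absurd this (not_le.2 hy)
    have hx1 : A < |x + r| := by
      have := abs_sub_abs_le_abs_sub (x) (-r)
      simp only [abs_neg, sub_neg_eq_add] at this
      have hrabs : |(-r)| ≤ R₀ := by rw [abs_neg, abs_of_nonneg hr.1]; exact hr.2
      rw [abs_neg] at hrabs
      nlinarith [abs_nonneg (x + r)]
    have hx2 : A < |x - r| := by
      have := abs_sub_abs_le_abs_sub x r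
      have hrabs : |r| ≤ R₀ := by rw [abs_of_nonneg hr.1]; exact hr.2
      nlinarith [abs_nonneg (x - r)]
    have hx3 : A < |x| := by linarith
    simp [hD, hz _ hx1, hz _ hx2, hz _ hx3]
  have hDcont : Continuous fun q : ℝ × ℝ => D q.1 q.2 := by
    apply Continuous.sub
    · exact (hv.comp (continuous_snd.add continuous_fst)).add
        (hv.comp (continuous_snd.sub continuous_fst))
    · exact (continuous_const.mul (hv.comp continuous_snd))
  -- the H kernel
  set H : ℝ × ℝ → ℝ := fun z => ∫ x, D z.1 x * D z.2 x with hH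
  have hHmeas : StronglyMeasurable H := by
    have : Continuous fun w : (ℝ × ℝ) × ℝ => D w.1.1 w.2 * D w.1.2 w.2 :=
      (hDcont.comp ((continuous_fst.fst).prodMk continuous_snd)).mul
        (hDcont.comp ((continuous_fst.snd).prodMk continuous_snd))
    exact this.stronglyMeasurable.integral_prod_right'
  have hHbd : ∀ z : ℝ × ℝ, z.1 ∈ Set.Icc 0 R₀ → z.2 ∈ Set.Icc 0 R₀ →
      |H z| ≤ (4*C) * (4*C) * (volume K).toReal := by
    intro z hz1 hz2
    have heq : (fun x => D z.1 x * D z.2 x) = K.indicator (fun x => D z.1 x * D z.2 x) := by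
      funext x
      by_cases hx : x ∈ K
      · simp [hx]
      · simp [hx, hDzero z.1 hz1 x hx]
    have hveq : H z = ∫ x in K, D z.1 x * D z.2 x := by
      simp only [hH]
      conv_lhs => rw [heq]
      exact integral_indicator hKm
    rw [hveq, ← Real.norm_eq_abs]
    refine norm_setIntegral_le_of_norm_le_const hKfin (fun x _ => ?_)
    · rw [Real.norm_eq_abs, abs_mul]
      exact mul_le_mul (hDbd _ _) (hDbd _ _) (abs_nonneg _) (by linarith)
  -- the integrand over the product with x
  set F : ℝ → ℝ × ℝ → ℝ := fun x z => (φt z.1 * D z.1 x) * (φt z.2 * D z.2 x) with hF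
  have hφν : Integrable φt ν := hφint.integrableOn
  have hφφ : Integrable (fun z : ℝ × ℝ => |φt z.1| * |φt z.2|) (ν.prod ν) :=
    hφν.abs.mul_prod hφν.abs
  have hφφm : AEStronglyMeasurable (fun z : ℝ × ℝ => φt z.1 * φt z.2) (ν.prod ν) :=
    ((hφm.comp_measurable measurable_fst).mul
      (hφm.comp_measurable measurable_snd)).aestronglyMeasurable
  have hFint : Integrable (Function.uncurry F) (volume.prod (ν.prod ν)) := by
    have hmeas : AEStronglyMeasurable (Function.uncurry F) (volume.prod (ν.prod ν)) := by
      refine StronglyMeasurable.aestronglyMeasurable ?_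
      apply StronglyMeasurable.mul
      · exact ((hφm.comp_measurable (measurable_fst.comp measurable_snd)).mul
          ((hDcont.comp ((continuous_snd.fst).prodMk continuous_fst)).stronglyMeasurable))
      · exact ((hφm.comp_measurable (measurable_snd.comp measurable_snd)).mul
          ((hDcont.comp ((continuous_snd.snd).prodMk continuous_fst)).stronglyMeasurable))
    have hBint : Integrable (fun w : ℝ × (ℝ × ℝ) =>
        (K.indicator (fun _ => (4*C) * (4*C)) w.1) * (|φt w.2.1| * |φt w.2.2|))
        (volume.prod (ν.prod ν)) := by
      refine Integrable.mul_prod ?_ hφφ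
      rw [integrable_indicator_iff hKm]
      exact integrableOn_const hKfin.ne
    refine hBint.mono' hmeas (Filter.Eventually.of_forall fun w => ?_)
    obtain ⟨x, r, s⟩ := w
    by_cases hr : r ∈ Set.Icc 0 R₀
    · by_cases hs : s ∈ Set.Icc 0 R₀
      · by_cases hx : x ∈ K
        · simp only [Function.uncurry, hF, Real.norm_eq_abs, Set.indicator_of_mem hx]
          rw [abs_mul, abs_mul, abs_mul]
          calc |φt r| * |D r x| * (|φt s| * |D s x|)
              ≤ |φt r| * (4*C) * (|φt s| * (4*C)) := by
                gcongr; exacts [hDbd r x, hDbd s x]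
            _ = (4*C) * (4*C) * (|φt r| * |φt s|) := by ring
        · simp only [Function.uncurry, hF, hDzero r hr x hx, Real.norm_eq_abs]
          rw [Set.indicator_of_notMem hx]
          simp [abs_nonneg, mul_nonneg]
      · simp only [Function.uncurry, hF, hsupp s hs, Real.norm_eq_abs]
        simp only [mul_zero, zero_mul, abs_zero]
        positivity
    · simp only [Function.uncurry, hF, hsupp r hr, Real.norm_eq_abs]
      simp only [mul_zero, zero_mul, abs_zero]
      positivity
  -- Now the chain
  have step1 : ∀ x, (∫ r, φt r * D r x ∂ν)^2 = ∫ z, F x z ∂(ν.prod ν) := by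
    intro x
    rw [pow_two, ← integral_prod_mul (μ := ν) (ν := ν)
      (f := fun r => φt r * D r x) (g := fun s => φt s * D s x)]
  have step3 : ∀ z : ℝ × ℝ, (∫ x, F x z) = φt z.1 * φt z.2 * H z := by
    intro z
    rw [hH]; simp only [← integral_const_mul]
    congr 1; funext x; rw [hF]; ring
  constructor
  · calc ∫ x, (∫ r in Set.Icc 0 R₀, φt r * (v (x + r) + v (x - r) - 2 * v x))^2
        = ∫ x, ∫ z, F x z ∂(ν.prod ν) := by
          congr 1; funext x; exact step1 x
      _ = ∫ z, (∫ x, F x z) ∂(ν.prod ν) := integral_integral_swap hFint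
      _ = ∫ z, φt z.1 * φt z.2 * H z ∂(ν.prod ν) := by
          congr 1; funext z; exact step3 z
  · -- integrability of z ↦ φφ H z
    have hmeas : AEStronglyMeasurable (fun z : ℝ × ℝ => φt z.1 * φt z.2 * H z) (ν.prod ν) :=
      hφφm.mul hHmeas.aestronglyMeasurable
    have hBint : Integrable (fun z : ℝ × ℝ =>
        |φt z.1| * |φt z.2| * ((4*C) * (4*C) * (volume K).toReal)) (ν.prod ν) :=
      hφφ.mul_const _
    refine hBint.mono' hmeas (Filter.Eventually.of_forall fun z => ?_)
    by_cases hr : z.1 ∈ Set.Icc 0 R₀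
    · by_cases hs : z.2 ∈ Set.Icc 0 R₀
      · rw [Real.norm_eq_abs, abs_mul, abs_mul]
        refine mul_le_mul_of_nonneg_left (hHbd z hr hs) (by positivity)
      · rw [Real.norm_eq_abs, hsupp _ hs]; simp
    · rw [Real.norm_eq_abs, hsupp _ hr]; simp

set_option maxHeartbeats 1600000 in
/-- Spectral representation of the quadratic form:
`(1/N) Σ_i ‖L_φ[u_i]‖²_{L²(ℝ)} = Σ_k λ_k c_k²` where `c_k = ⟨φ, ψ_k⟩`. -/
theorem quadratic_form_eigen_expansion (R₀ : ℝ) (hR₀ : 0 < R₀)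
    (N : ℕ) (hN : 0 < N) (u : Fin N → ℝ → ℝ)
    (hu : ∀ i, Continuous (u i)) (hcs : ∀ i, HasCompactSupport (u i))
    (p : ℝ → ℝ) (hpc : ContinuousOn p (Set.Icc 0 R₀)) (hpp : ∀ r ∈ Set.Icc 0 R₀, 0 < p r)
    (ρ : Measure ℝ) [IsProbabilityMeasure ρ]
    (hρ : ρ = (volume.restrict (Set.Icc 0 R₀)).withDensity fun r => ENNReal.ofReal (p r))
    (T : Lp ℝ 2 ρ →L[ℝ] Lp ℝ 2 ρ)
    (hT : ∀ φ : Lp ℝ 2 ρ,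
      (T φ : ℝ → ℝ) =ᵐ[ρ] fun r => ∫ s, (φ : ℝ → ℝ) s * Gbar N u p r s ∂ρ)
    (ψb : ℕ → Lp ℝ 2 ρ) (hon : Orthonormal ℝ ψb)
    (hcomplete : (Submodule.span ℝ (Set.range ψb)).topologicalClosure = ⊤)
    (lam : ℕ → ℝ) (hlam : ∀ k, 0 ≤ lam k) (heig : ∀ k, T (ψb k) = lam k • ψb k)
    (φ : Lp ℝ 2 ρ) :
    (N : ℝ)⁻¹ * ∑ i, ∫ x, (LopLp R₀ φ (u i) x) ^ 2
      = ∑' k, lam k * ⟪φ, ψb k⟫ ^ 2 := by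
  set ν : Measure ℝ := volume.restrict (Set.Icc 0 R₀) with hν
  set φt : ℝ → ℝ := (Set.Icc 0 R₀).indicator (φ : ℝ → ℝ) with hφt
  haveI : IsFiniteMeasure ν := by
    constructor; rw [hν, Measure.restrict_apply_univ, Real.volume_Icc]; exact ENNReal.ofReal_lt_top
  have hφm : StronglyMeasurable φt := (Lp.stronglyMeasurable φ).indicator measurableSet_Icc
  have hsupp : ∀ r, r ∉ Set.Icc 0 R₀ → φt r = 0 := fun r hr => Set.indicator_of_notMem hr _
  -- integrability of φt
  have hφint : Integrable φt := by
    obtain ⟨x₀, hx₀, hmin⟩ := isCompact_Icc.exists_isMinOn (nonempty_Icc.2 hR₀.le) hpc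
    have hε0 : 0 < p x₀ := hpp x₀ hx₀
    have hc0 : ENNReal.ofReal (p x₀) ≠ 0 := by simp [ENNReal.ofReal_pos.2 hε0, ne_of_gt]
    have hle : ν ≤ (ENNReal.ofReal (p x₀))⁻¹ • ρ := by
      refine Measure.le_intro fun s hs _ => ?_
      have h1 : ρ s = ∫⁻ a in s, ENNReal.ofReal (p a) ∂ν := by
        rw [hρ]; exact withDensity_apply _ hs
      have h2 : ENNReal.ofReal (p x₀) * ν s ≤ ρ s := by
        rw [h1, ← setLIntegral_const s (ENNReal.ofReal (p x₀))]
        refine lintegral_mono_ae ?_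
        have : ν.restrict s = volume.restrict (s ∩ Set.Icc 0 R₀) := by
          rw [hν, Measure.restrict_restrict hs]
        rw [this]
        filter_upwards [ae_restrict_mem (hs.inter measurableSet_Icc)] with x hx
        exact ENNReal.ofReal_le_ofReal (hmin hx.2)
      calc ν s = (ENNReal.ofReal (p x₀))⁻¹ * (ENNReal.ofReal (p x₀) * ν s) := by
              rw [← mul_assoc, ENNReal.inv_mul_cancel hc0 ENNReal.ofReal_ne_top, one_mul]
        _ ≤ (ENNReal.ofReal (p x₀))⁻¹ * ρ s := by gcongr
        _ = ((ENNReal.ofReal (p x₀))⁻¹ • ρ) s := rfl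
    have hmem : MemLp (φ : ℝ → ℝ) 2 ν :=
      ((Lp.memLp φ).smul_measure (ENNReal.inv_ne_top.2 hc0)).mono_measure hle
    have h1 : Integrable (φ : ℝ → ℝ) ν :=
      memLp_one_iff_integrable.1 (hmem.mono_exponent (by norm_num))
    exact (integrable_indicator_iff measurableSet_Icc).2 h1
  -- the per-sample product integrands
  set F : Fin N → ℝ × ℝ → ℝ := fun i z => φt z.1 * φt z.2 *
    (∫ x, (u i (x + z.1) + u i (x - z.1) - 2 * u i x) *
      (u i (x + z.2) + u i (x - z.2) - 2 * u i x)) with hF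
  have hfub : ∀ i : Fin N,
      (∫ x, (∫ r in Set.Icc 0 R₀, φt r * (u i (x + r) + u i (x - r) - 2 * u i x))^2
        = ∫ z, F i z ∂(ν.prod ν)) ∧ Integrable (F i) (ν.prod ν) :=
    fun i => fubini_core R₀ hR₀ (u i) (hu i) (hcs i) φt hφm hφint hsupp
  -- main analytic identity
  have hGeq : (fun z : ℝ × ℝ => φt z.1 * φt z.2 * Gker N u z.1 z.2)
      = fun z => (N : ℝ)⁻¹ * ∑ i, F i z := by
    funext z
    simp only [hF, Gker, Finset.mul_sum]
    exact Finset.sum_congr rfl fun i _ => by ring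
  have hGint : Integrable (fun z : ℝ × ℝ => φt z.1 * φt z.2 * Gker N u z.1 z.2) (ν.prod ν) := by
    rw [hGeq]
    exact (integrable_finset_sum _ fun i _ => (hfub i).2).const_mul _
  have hmain : (N : ℝ)⁻¹ * ∑ i, ∫ x, (LopLp R₀ φ (u i) x) ^ 2
      = ∫ r, (∫ s, φt r * φt s * Gker N u r s ∂ν) ∂ν := by
    calc (N : ℝ)⁻¹ * ∑ i, ∫ x, (LopLp R₀ φ (u i) x) ^ 2
        = (N : ℝ)⁻¹ * ∑ i, ∫ z, F i z ∂(ν.prod ν) := by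
          congr 1
          refine Finset.sum_congr rfl fun i _ => ?_
          rw [← (hfub i).1]
          congr 1
          funext x
          congr 1
          exact Lop_rep R₀ hR₀ (u i) (hu i) (hcs i) φt hφm hφint hsupp x
      _ = ∫ z, (N : ℝ)⁻¹ * ∑ i, F i z ∂(ν.prod ν) := by
          rw [integral_const_mul, integral_finset_sum _ fun i _ => (hfub i).2]
      _ = ∫ z, φt z.1 * φt z.2 * Gker N u z.1 z.2 ∂(ν.prod ν) := by rw [hGeq]
      _ = ∫ r, (∫ s, φt r * φt s * Gker N u r s ∂ν) ∂ν := integral_prod _ hGint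
  -- inner product computation
  have hpm : AEMeasurable (fun a => (p a).toNNReal) ν :=
    (hpc.aemeasurable measurableSet_Icc).real_toNNReal
  have hρ' : ρ = ν.withDensity fun a => ((p a).toNNReal : ℝ≥0∞) := by rw [hρ]; rfl
  have hconv : ∀ g : ℝ → ℝ, ∫ a, g a ∂ρ = ∫ a, p a * g a ∂ν := by
    intro g
    rw [hρ', integral_withDensity_eq_integral_smul₀ hpm g]
    refine integral_congr_ae ?_
    filter_upwards [ae_restrict_mem measurableSet_Icc] with a ha
    simp [NNReal.smul_def, Real.coe_toNNReal _ (hpp a ha).le]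
  have hinner : ⟪φ, T φ⟫ = ∫ r, (∫ s, φt r * φt s * Gker N u r s ∂ν) ∂ν := by
    have h1 : ⟪φ, T φ⟫ = ∫ a, (φ : ℝ → ℝ) a * (T φ : ℝ → ℝ) a ∂ρ := by
      rw [MeasureTheory.L2.inner_def]
      congr 1
      ext a; exact Real.inner_apply _ _
    have h2 : ∫ a, (φ : ℝ → ℝ) a * (T φ : ℝ → ℝ) a ∂ρ
        = ∫ r, (φ : ℝ → ℝ) r * (∫ s, (φ : ℝ → ℝ) s * Gbar N u p r s ∂ρ) ∂ρ := by
      refine integral_congr_ae ?_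
      filter_upwards [hT φ] with r hr
      rw [hr]
    have hinnerint : ∀ r ∈ Set.Icc 0 R₀, ∫ s, (φ : ℝ → ℝ) s * Gbar N u p r s ∂ρ
        = (p r)⁻¹ * ∫ s, φt s * Gker N u r s ∂ν := by
      intro r hr
      rw [hconv, ← integral_const_mul]
      refine setIntegral_congr_fun measurableSet_Icc fun s hs => ?_
      have hps : p s ≠ 0 := (hpp s hs).ne'
      rw [hφt, Set.indicator_of_mem hs]
      simp only [Gbar, div_eq_mul_inv, mul_inv]
      rw [show p s * ((φ : ℝ → ℝ) s * (Gker N u r s * ((p r)⁻¹ * (p s)⁻¹)))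
          = (p s * (p s)⁻¹) * ((p r)⁻¹ * ((φ : ℝ → ℝ) s * Gker N u r s)) from by ring,
        mul_inv_cancel₀ hps, one_mul]
    rw [h1, h2, hconv]
    calc ∫ r, p r * ((φ : ℝ → ℝ) r * ∫ s, (φ : ℝ → ℝ) s * Gbar N u p r s ∂ρ) ∂ν
        = ∫ r, φt r * (∫ s, φt s * Gker N u r s ∂ν) ∂ν := by
          refine setIntegral_congr_fun measurableSet_Icc fun r hr => ?_
          rw [hinnerint r hr, hφt, Set.indicator_of_mem hr]
          have hpr : p r ≠ 0 := (hpp r hr).ne'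
          rw [show p r * ((φ : ℝ → ℝ) r * ((p r)⁻¹ * ∫ s, φt s * Gker N u r s ∂ν))
              = (p r * (p r)⁻¹) * ((φ : ℝ → ℝ) r * ∫ s, φt s * Gker N u r s ∂ν) from by ring,
            mul_inv_cancel₀ hpr, one_mul]
      _ = ∫ r, (∫ s, φt r * φt s * Gker N u r s ∂ν) ∂ν := by
          congr 1; funext r
          rw [← integral_const_mul]
          congr 1; funext s; ring
  -- spectral side
  have hspec : ⟪φ, T φ⟫ = ∑' k, lam k * ⟪φ, ψb k⟫ ^ 2 := by
    let b : HilbertBasis ℕ ℝ (Lp ℝ 2 ρ) := HilbertBasis.mk hon (le_of_eq hcomplete.symm)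
    have hb : ∀ k, b k = ψb k := fun k => congrFun (HilbertBasis.coe_mk hon _) k
    have h1 : HasSum (fun k => (b.repr φ k) • ψb k) φ := by
      simpa [hb] using b.hasSum_repr φ
    have h2 : HasSum (fun k => (b.repr φ k) • T (ψb k)) (T φ) :=
      (T.hasSum h1).congr_fun (by intro k; simp)
    have h3 : HasSum (fun k => ⟪φ, (b.repr φ k) • T (ψb k)⟫) ⟪φ, T φ⟫ :=
      (innerSL ℝ φ).hasSum h2
    have h4 : ∀ k, ⟪φ, (b.repr φ k) • T (ψb k)⟫ = lam k * ⟪φ, ψb k⟫ ^ 2 := by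
      intro k
      have : b.repr φ k = ⟪ψb k, φ⟫ := by rw [b.repr_apply_apply, hb]
      rw [heig, this, real_inner_smul_right, real_inner_smul_right, real_inner_comm]
      ring
    rw [← h3.tsum_eq]
    exact tsum_congr h4
  rw [hmain, ← hinner, hspec]
end
end
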